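/- arXiv:1908.03672 — 8 statements merged into one kernel-verified Lean document; each statement's English description precedes it below -/
import Mathlib

section
/- Define $Z_n^W: W^n \to \mathbb{Z}[\mathcal{D}]$ by $Z_n^W(x_1,\ldots,x_n) = \sum_{D \in \mathcal{D}} \left( \prod_{i=0}^{n-1} (v_D(C_i) - v_D(C_{i+1})) \right) [D]$, where $C_i = x_1 \cdots x_i C_0$. Then $Z_n^W$ is an $n$-cocycle for the group cohomology of $W$ with coefficients in $\mathbb{Z}[\mathcal{D}]$: for all $x_1, \ldots, x_{n+1} \in W$, $x_1 Z_n(x_2,\ldots,x_{n+1}) + \sum_{j=1}^n (-1)^j Z_n(x_1,\ldots,x_j x_{j+1},\ldots,x_{n+1}) + (-1)^{n+1} Z_n(x_1,\ldots,x_n) = 0$. -/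
/-!
The coefficient of `[D]` in `Zₙ(x)` is the product of the successive differences of the sequence
`k ↦ v_D(C_k)` along the gallery `C₀, C₁, …, Cₙ`, i.e. `Zₙ` is the `n`-th cup power of the
coboundary of `v`. For any sequence `c`, the alternating sum over the `n + 2` ways of deleting
one term of `c₀, …, c_{n+1}` of the products of consecutive differences telescopes to `0`; this
is the cocycle identity, provided `W` acts compatibly: `v_{uD}(C) = v_D(u⁻¹C)`.

That compatibility amounts to the rule `N(uv) = N(u) Δ u N(v) u⁻¹` for the sets of left
inversions. It comes from Tits' action of `W` on `W × ZMod 2`, in which a simple reflection `s`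
acts by `(t, ε) ↦ (s t s, ε + [t = s])`: the second coordinate of `w • (t, 0)` counts, modulo 2,
the occurrences of `t` in the right inversion sequence of any word for `w`, so it detects the
right inversions of `w`. The action is well defined because for simple `s, s'` with
`(s s')ᵐ = 1` each reflection `(s' s)ᵏ s'`, `k < 2m`, occurs an even number of times.
-/

open CoxeterSystem

variable {B W : Type*} [Group W] {M : CoxeterMatrix B}

/-- Given an `(n+1)`-tuple `(x₀, …, xₙ)`, the `n`-tuple obtained by multiplying the
`j`-th and `(j+1)`-st entries: `(x₀, …, x_{j-1}, x_j · x_{j+1}, x_{j+2}, …, xₙ)`. -/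
def contract {n : ℕ} (x : Fin (n + 1) → W) (j : Fin n) : Fin n → W :=
  fun i =>
    if (i : ℕ) < (j : ℕ) then x i.castSucc
    else if i = j then x i.castSucc * x i.succ
    else x i.succ

/-- `ζ` is an `n`-cocycle for the group cohomology of `W` with coefficients in the
abelian group `A` with trivial `W`-action: `(δζ) = 0`. -/
def IsCocycle {A : Type*} [AddCommGroup A] (n : ℕ) (ζ : (Fin n → W) → A) : Prop :=
  ∀ x : Fin (n + 1) → W,
    ζ (x ∘ Fin.succ)
      + ∑ j : Fin n, ((-1 : ℤ) ^ ((j : ℕ) + 1)) • ζ (contract x j)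
      + ((-1 : ℤ) ^ (n + 1)) • ζ (x ∘ Fin.castSucc) = 0

/-- `ζ` is an `n`-cocycle for the group cohomology of `W` with coefficients in the
`ℤ[W]`-module `A`: `(δζ) = 0`. -/
def IsCocycleM {A : Type*} [AddCommGroup A] [DistribMulAction W A] (n : ℕ)
    (ζ : (Fin n → W) → A) : Prop :=
  ∀ x : Fin (n + 1) → W,
    x 0 • ζ (x ∘ Fin.succ)
      + ∑ j : Fin n, ((-1 : ℤ) ^ ((j : ℕ) + 1)) • ζ (contract x j)
      + ((-1 : ℤ) ^ (n + 1)) • ζ (x ∘ Fin.castSucc) = 0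

/-- `ζ` is collapsing: it vanishes on tuples where two consecutive entries have
additive lengths. -/
def Collapsing (cs : CoxeterSystem M W) {A : Type*} [AddCommGroup A] (n : ℕ)
    (ζ : (Fin n → W) → A) : Prop :=
  ∀ x : Fin n → W, ∀ i : Fin n, ∀ hi : (i : ℕ) + 1 < n,
    cs.length (x i * x ⟨(i : ℕ) + 1, hi⟩) =
        cs.length (x i) + cs.length (x ⟨(i : ℕ) + 1, hi⟩) →
      ζ x = 0

/-- `ζ` is the canonical cocycle `ε_n^W`: a collapsing `n`-cocycle (trivial coefficients)
taking the value `1` on `(s, …, s)` for every simple reflection `s`. -/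
def IsEps (cs : CoxeterSystem M W) {A : Type*} [AddCommGroup A] [One A] (n : ℕ)
    (ζ : (Fin n → W) → A) : Prop :=
  IsCocycle n ζ ∧ Collapsing cs n ζ ∧ ∀ i : B, ζ (fun _ => cs.simple i) = 1

/-- The prefix product `x₀ ⋯ x_{k-1}`. -/
def pp {n : ℕ} (x : Fin n → W) (k : ℕ) : W := ((List.ofFn x).take k).prod

/-- The set `𝒟` of reflecting half-spaces: a half-space is determined by its wall
(a reflection `t`) and a side.  `(t, false)` is the half-space `D_{H_t}^+` containing
the fundamental chamber `C₀`, and `(t, true)` is `D_{H_t}^-`. -/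
def HalfSpace (cs : CoxeterSystem M W) : Type _ := {t : W // cs.IsReflection t} × Bool

/-- `v_D(C) = 1` if the chamber `C = wC₀` is contained in `D`, and `0` otherwise.
The chamber `wC₀` lies on the negative side of the wall of `t` exactly when `t` is a
left inversion of `w`. -/
noncomputable def chamberSide (cs : CoxeterSystem M W) (D : HalfSpace cs) (w : W) : ℤ :=
  if ((cs.length (D.1.1 * w) < cs.length w) ↔ D.2 = true) then 1 else 0

/-- The action of `W` on the set of reflecting half-spaces:  `w` sends the half-space
with wall `H_t` to a half-space with wall `H_{wtw⁻¹} = wH_t`, and the side is switched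
according to whether `wtw⁻¹` separates `C₀` from `wC₀`. -/
noncomputable def halfSpaceAct (cs : CoxeterSystem M W) (w : W) (D : HalfSpace cs) :
    HalfSpace cs :=
  (⟨w * D.1.1 * w⁻¹, D.1.2.conj w⟩,
    xor D.2 (decide (cs.length (w * D.1.1) < cs.length w)))

/-- The coefficient of the basis element `[D]` in
`Z_n^W(x₁,…,xₙ) = ∑_D (∏_{i=0}^{n-1} (v_D(Cᵢ) - v_D(C_{i+1}))) [D] ∈ ℤ[𝒟]`,
where `Cᵢ = x₁⋯xᵢC₀`. -/
noncomputable def Zcoeff (cs : CoxeterSystem M W) (n : ℕ) (x : Fin n → W)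
    (D : HalfSpace cs) : ℤ :=
  ∏ i ∈ Finset.range n, (chamberSide cs D (pp x i) - chamberSide cs D (pp x (i + 1)))

open Finset

section ConjToggle

open scoped Classical

variable {G : Type*} [Group G]

noncomputable def conjToggle (b : G) : Equiv.Perm (G × ZMod 2) where
  toFun p := (b * p.1 * b⁻¹, p.2 + if p.1 = b then 1 else 0)
  invFun p := (b⁻¹ * p.1 * b, p.2 - if b⁻¹ * p.1 * b = b then 1 else 0)
  left_inv p := by simp [mul_assoc]
  right_inv p := by simp [mul_assoc]

theorem conjToggle_apply (b t : G) (ε : ZMod 2) :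
    conjToggle b (t, ε) = (b * t * b⁻¹, ε + if t = b then 1 else 0) := rfl

theorem pow_apply_of_apply_eq_conj_add {X : Equiv.Perm (G × ZMod 2)} {g : G} {f : G → ZMod 2}
    (hX : ∀ t ε, X (t, ε) = (g * t * g⁻¹, ε + f t)) (k : ℕ) (t : G) (ε : ZMod 2) :
    (X ^ k) (t, ε) = (g ^ k * t * (g ^ k)⁻¹, ε + ∑ l ∈ range k, f (g ^ l * t * (g ^ l)⁻¹)) := by
  induction k generalizing t ε with
  | zero => simp
  | succ k ih =>
    rw [pow_succ, Equiv.Perm.mul_apply, hX, ih, sum_range_succ']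
    refine Prod.ext ?_ ?_
    · simp only [pow_succ]
      group
    · simp only [pow_succ, pow_zero, one_mul, inv_one, mul_one]
      rw [add_assoc, add_comm (f t)]
      congr 3 with l
      group

theorem conj_eq_iff_eq_inv_conj (x t c : G) : x * t * x⁻¹ = c ↔ t = x⁻¹ * c * x := by
  rw [mul_inv_eq_iff_eq_mul, eq_inv_mul_iff_mul_eq.symm, mul_assoc]

theorem inv_mul_pow_of_involutions {a b : G} (ha : a * a = 1) (hb : b * b = 1) (l : ℕ) :
    ((a * b) ^ l)⁻¹ = (b * a) ^ l := by
  rw [← inv_pow, mul_inv_rev, inv_eq_of_mul_eq_one_right ha, inv_eq_of_mul_eq_one_right hb]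

theorem mul_pow_conj_eq_iff {a b : G} (ha : a * a = 1) (hb : b * b = 1) (l : ℕ) (t : G) :
    (a * b) ^ l * t * ((a * b) ^ l)⁻¹ = b ↔ t = (b * a) ^ (2 * l) * b := by
  rw [conj_eq_iff_eq_inv_conj, inv_mul_pow_of_involutions ha hb, mul_assoc,
    (SemiconjBy.pow_right (mul_assoc b a b).symm l).eq, ← mul_assoc, ← pow_add, two_mul]

theorem mul_pow_conj_eq_conj_iff {a b : G} (ha : a * a = 1) (hb : b * b = 1) (l : ℕ) (t : G) :
    (a * b) ^ l * t * ((a * b) ^ l)⁻¹ = b * a * b ↔ t = (b * a) ^ (2 * l + 1) * b := by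
  rw [conj_eq_iff_eq_inv_conj, inv_mul_pow_of_involutions ha hb, mul_assoc _ (b * a * b),
    mul_assoc (b * a) b, (SemiconjBy.pow_right (mul_assoc b a b).symm l).eq,
    show 2 * l + 1 = l + (l + 1) by ring, pow_add, pow_succ']
  simp only [mul_assoc]

theorem sum_range_two_mul {M : Type*} [AddCommMonoid M] (F : ℕ → M) (m : ℕ) :
    ∑ k ∈ range (2 * m), F k = ∑ l ∈ range m, (F (2 * l) + F (2 * l + 1)) := by
  induction m with
  | zero => simp
  | succ m ih =>
    rw [mul_add, mul_one, sum_range_succ, sum_range_succ, sum_range_succ, ← ih, add_assoc]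

theorem conjToggle_mul_conjToggle_pow_eq_one {a b : G} (ha : a * a = 1) (hb : b * b = 1) {m : ℕ}
    (hm : (a * b) ^ m = 1) : (conjToggle a * conjToggle b) ^ m = 1 := by
  have hX (t : G) (ε : ZMod 2) : (conjToggle a * conjToggle b) (t, ε) = ((a * b) * t * (a * b)⁻¹,
      ε + ((if t = b then 1 else 0) + if t = b * a * b then 1 else 0)) := by
    have hcond : b * t * b⁻¹ = a ↔ t = b * a * b := by
      rw [conj_eq_iff_eq_inv_conj, inv_eq_of_mul_eq_one_right hb]
    rw [Equiv.Perm.mul_apply, conjToggle_apply, conjToggle_apply, add_assoc,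
      if_congr hcond rfl rfl]
    congr 1
    group
  have hperiod : (b * a) ^ m = 1 := by
    rw [← inv_mul_pow_of_involutions ha hb, hm, inv_one]
  ext ⟨t, ε⟩ : 1
  rw [pow_apply_of_apply_eq_conj_add hX, hm, one_mul, inv_one, mul_one, Equiv.Perm.one_apply]
  simp only [mul_pow_conj_eq_iff ha hb, mul_pow_conj_eq_conj_iff ha hb,
    ← sum_range_two_mul (fun k => if t = (b * a) ^ k * b then (1 : ZMod 2) else 0)]
  -- the reflections `(b * a) ^ k * b` of the dihedral subgroup repeat with period `m`
  rw [two_mul, sum_range_add]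
  simp only [pow_add, hperiod, one_mul, CharTwo.add_self_eq_zero, add_zero]

end ConjToggle

namespace CoxeterSystem

variable (cs : CoxeterSystem M W)

theorem isLiftable_conjToggle_simple : M.IsLiftable (fun i => conjToggle (cs.simple i)) :=
  fun i j => conjToggle_mul_conjToggle_pow_eq_one (cs.simple_mul_simple_self i)
    (cs.simple_mul_simple_self j) (cs.simple_mul_simple_pow i j)

noncomputable def conjToggleLift : W →* Equiv.Perm (W × ZMod 2) :=
  cs.lift ⟨_, cs.isLiftable_conjToggle_simple⟩

theorem conjToggleLift_simple (i : B) :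
    cs.conjToggleLift (cs.simple i) = conjToggle (cs.simple i) :=
  cs.lift_apply_simple cs.isLiftable_conjToggle_simple i

noncomputable def inversionParity (w t : W) : ZMod 2 := (cs.conjToggleLift w (t, 0)).2

theorem conjToggleLift_apply (w t : W) (ε : ZMod 2) :
    cs.conjToggleLift w (t, ε) = (w * t * w⁻¹, ε + cs.inversionParity w t) := by
  induction w using cs.simple_induction_left generalizing t ε with
  | one => simp [inversionParity]
  | mul_simple_left w i ih =>
    classical
    have key (δ : ZMod 2) : cs.conjToggleLift (cs.simple i * w) (t, δ) =
        (cs.simple i * (w * t * w⁻¹) * (cs.simple i)⁻¹,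
          δ + cs.inversionParity w t + if w * t * w⁻¹ = cs.simple i then 1 else 0) := by
      rw [map_mul, Equiv.Perm.mul_apply, ih, conjToggleLift_simple, conjToggle_apply]
    rw [key, inversionParity.eq_1 cs (cs.simple i * w), key, zero_add, add_assoc, mul_inv_rev]
    simp only [mul_assoc]

theorem inversionParity_mul (u v t : W) :
    cs.inversionParity (u * v) t
      = cs.inversionParity v t + cs.inversionParity u (v * t * v⁻¹) := by
  rw [inversionParity, map_mul, Equiv.Perm.mul_apply, conjToggleLift_apply, conjToggleLift_apply,
    zero_add]

open scoped Classical in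
theorem inversionParity_simple (i : B) (t : W) :
    cs.inversionParity (cs.simple i) t = if t = cs.simple i then 1 else 0 := by
  simp [inversionParity, conjToggleLift_simple, conjToggle_apply]

theorem inversionParity_one (t : W) : cs.inversionParity 1 t = 0 := by
  simp [inversionParity]

theorem inversionParity_self {t : W} (ht : cs.IsReflection t) : cs.inversionParity t t = 1 := by
  obtain ⟨u, i, rfl⟩ := ht
  have h1 := cs.inversionParity_mul (u * cs.simple i) u⁻¹ (u * cs.simple i * u⁻¹)
  have h2 := cs.inversionParity_mul u (cs.simple i) (cs.simple i)
  have h3 := cs.inversionParity_mul u⁻¹ u (cs.simple i)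
  simp only [inv_mul_cancel, inversionParity_one, inversionParity_simple, cs.inv_simple,
    cs.simple_mul_simple_cancel_right, if_true] at h1 h2 h3
  rw [show u⁻¹ * (u * cs.simple i * u⁻¹) * u⁻¹⁻¹ = cs.simple i by group] at h1
  linear_combination h1 + h2 - h3

theorem mem_rightInvSeq_of_inversionParity_ne_zero (ω : List B) (t : W)
    (h : cs.inversionParity (cs.wordProd ω) t ≠ 0) : t ∈ cs.rightInvSeq ω := by
  induction ω with
  | nil => simp [inversionParity_one] at h
  | cons i ω ih =>
    rw [cs.wordProd_cons, inversionParity_mul, inversionParity_simple] at h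
    rw [rightInvSeq, List.mem_cons]
    by_cases hconj : cs.wordProd ω * t * (cs.wordProd ω)⁻¹ = cs.simple i
    · left
      rw [← hconj]
      group
    · right
      exact ih (by simpa [hconj] using h)

theorem length_mul_lt_of_inversionParity_ne_zero {w t : W} (h : cs.inversionParity w t ≠ 0) :
    cs.length (w * t) < cs.length w := by
  obtain ⟨ω, hω, rfl⟩ := cs.exists_isReduced w
  exact (cs.isRightInversion_of_mem_rightInvSeq hω
    (cs.mem_rightInvSeq_of_inversionParity_ne_zero ω t h)).2

theorem inversionParity_eq_one_iff {w t : W} (ht : cs.IsReflection t) :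
    cs.inversionParity w t = 1 ↔ cs.length (w * t) < cs.length w := by
  refine ⟨fun h => cs.length_mul_lt_of_inversionParity_ne_zero (h ▸ one_ne_zero), fun hlt => ?_⟩
  have hzero : cs.inversionParity (w * t) t = 0 := by
    by_contra hne
    have := cs.length_mul_lt_of_inversionParity_ne_zero hne
    rw [mul_assoc, ht.mul_self, mul_one] at this
    omega
  simpa [mul_assoc, ht.mul_self, ht.inv, hzero, cs.inversionParity_self ht] using
    cs.inversionParity_mul (w * t) t t

theorem inversionParity_inv_eq_one_iff {w t : W} (ht : cs.IsReflection t) :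
    cs.inversionParity w⁻¹ t = 1 ↔ cs.length (t * w) < cs.length w := by
  rw [cs.inversionParity_eq_one_iff ht, ← cs.length_inv (t * w), mul_inv_rev, ht.inv,
    cs.length_inv]

theorem chamberSide_halfSpaceAct (u w : W) (D : HalfSpace cs) :
    chamberSide cs (halfSpaceAct cs u D) w = chamberSide cs D (u⁻¹ * w) := by
  obtain ⟨⟨t, ht⟩, b⟩ := D
  have key : ∀ (p q : ZMod 2) (b : Bool),
      ((q = 1 ↔ (b ^^ decide (p = 1)) = true) ↔ (p + q = 1 ↔ b = true)) := by decide
  simp only [chamberSide, halfSpaceAct, ← cs.inversionParity_eq_one_iff ht,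
    ← cs.inversionParity_inv_eq_one_iff ht, ← cs.inversionParity_inv_eq_one_iff (ht.conj u),
    mul_inv_rev, inv_inv, inversionParity_mul]
  exact if_congr (key _ _ _) rfl rfl

end CoxeterSystem

section DiffProd

variable {R : Type*} [CommRing R]

def diffProd (n : ℕ) (c : ℕ → R) : R := ∏ i ∈ range n, (c i - c (i + 1))

theorem diffProd_congr {n : ℕ} {c c' : ℕ → R} (h : ∀ k ≤ n, c k = c' k) :
    diffProd n c = diffProd n c' :=
  prod_congr rfl fun i hi => by
    rw [mem_range] at hi
    rw [h i hi.le, h (i + 1) hi]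

theorem diffProd_coboundary (n : ℕ) (c : ℕ → R) :
    diffProd n (fun k => c (k + 1))
      + ∑ j : Fin n, (-1 : R) ^ ((j : ℕ) + 1)
        * diffProd n (fun k => c (if k ≤ j then k else k + 1))
      + (-1) ^ (n + 1) * diffProd n c = 0 := by
  set a : ℕ → R := fun i => c i - c (i + 1)
  set Q : ℕ → R := fun k => (∏ i ∈ range k, a i) * ∏ i ∈ Ico k n, a (i + 1)
  have hfirst : diffProd n (fun k => c (k + 1)) = Q 0 := by
    simp only [Q, range_zero, prod_empty, one_mul, ← range_eq_Ico]
    rfl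
  have hlast : diffProd n c = Q n := by
    simp only [Q, Ico_self, prod_empty, mul_one]
    rfl
  have hface (j : ℕ) (hj : j < n) :
      diffProd n (fun k => c (if k ≤ j then k else k + 1)) = Q (j + 1) + Q j := by
    simp only [diffProd, Q, ← prod_range_mul_prod_Ico _ hj.le,
      prod_eq_prod_Ico_succ_bot hj, prod_range_succ]
    have hlow : ∏ k ∈ range j, (c (if k ≤ j then k else k + 1)
        - c (if k + 1 ≤ j then k + 1 else k + 1 + 1)) = ∏ k ∈ range j, a k :=
      prod_congr rfl fun k hk => by
        have := mem_range.mp hk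
        rw [if_pos (by omega), if_pos (by omega)]
    have hhigh : ∏ k ∈ Ico (j + 1) n, (c (if k ≤ j then k else k + 1)
        - c (if k + 1 ≤ j then k + 1 else k + 1 + 1)) = ∏ k ∈ Ico (j + 1) n, a (k + 1) :=
      prod_congr rfl fun k hk => by
        have := (mem_Ico.mp hk).1
        rw [if_neg (by omega), if_neg (by omega)]
    rw [hlow, hhigh, if_pos le_rfl, if_neg (by omega)]
    ring
  have hsum : ∑ j : Fin n, (-1 : R) ^ ((j : ℕ) + 1)
      * diffProd n (fun k => c (if k ≤ j then k else k + 1)) = (-1) ^ n * Q n - Q 0 := by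
    calc _ = ∑ j ∈ range n, ((-1 : R) ^ (j + 1) * Q (j + 1) - (-1) ^ j * Q j) := by
          rw [Fin.sum_univ_eq_sum_range (fun j => (-1 : R) ^ (j + 1) *
            diffProd n (fun k => c (if k ≤ j then k else k + 1)))]
          refine sum_congr rfl fun j hj => ?_
          rw [hface j (mem_range.mp hj), pow_succ]
          ring
      _ = (-1) ^ n * Q n - Q 0 := by
          rw [sum_range_sub (fun j => (-1 : R) ^ j * Q j), pow_zero, one_mul]
  rw [hfirst, hsum, hlast, pow_succ]
  ring

end DiffProd

theorem pp_succ {n : ℕ} (x : Fin n → W) {k : ℕ} (hk : k < n) :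
    pp x (k + 1) = pp x k * x ⟨k, hk⟩ := by
  rw [pp, List.prod_take_succ _ _ (by simpa using hk), List.getElem_ofFn]
  rfl

theorem pp_succ_eq_mul_pp_comp_succ {n : ℕ} (x : Fin (n + 1) → W) (k : ℕ) :
    pp x (k + 1) = x 0 * pp (x ∘ Fin.succ) k := by
  rw [pp, List.ofFn_succ, List.take_succ_cons, List.prod_cons]
  rfl

theorem pp_comp_castSucc {n : ℕ} (x : Fin (n + 1) → W) {k : ℕ} (hk : k ≤ n) :
    pp (x ∘ Fin.castSucc) k = pp x k := by
  rw [pp, pp, List.ofFn_succ', List.concat_eq_append, List.take_append_of_le_length (by simpa)]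
  rfl

theorem contract_of_lt {n : ℕ} (x : Fin (n + 1) → W) {j i : Fin n} (h : i < j) :
    contract x j i = x i.castSucc :=
  if_pos h

theorem contract_self {n : ℕ} (x : Fin (n + 1) → W) (j : Fin n) :
    contract x j j = x j.castSucc * x j.succ := by
  simp [contract]

theorem contract_of_gt {n : ℕ} (x : Fin (n + 1) → W) {j i : Fin n} (h : j < i) :
    contract x j i = x i.succ := by
  simp [contract, h.not_gt, h.ne']

theorem pp_contract {n : ℕ} (x : Fin (n + 1) → W) (j : Fin n) {k : ℕ} (hk : k ≤ n) :
    pp (contract x j) k = pp x (if k ≤ j then k else k + 1) := by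
  induction k with
  | zero => simp [pp]
  | succ k ih =>
    have hkn : k < n := hk
    rw [pp_succ _ hkn, ih hkn.le]
    rcases lt_trichotomy k j with hkj | rfl | hjk
    · rw [contract_of_lt x (show ⟨k, hkn⟩ < j from hkj), if_pos hkj.le,
        if_pos (Nat.succ_le_of_lt hkj), pp_succ x (by omega)]
      rfl
    · rw [Fin.eta, contract_self, if_pos le_rfl, if_neg (by omega), pp_succ x (by omega),
        pp_succ x (by omega), mul_assoc]
      rfl
    · rw [contract_of_gt x (show j < ⟨k, hkn⟩ from hjk), if_neg (by omega), if_neg (by omega),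
        pp_succ x (k := k + 1) (by omega)]
      rfl

theorem Zcoeff_comp_castSucc (cs : CoxeterSystem M W) {n : ℕ} (x : Fin (n + 1) → W)
    (D : HalfSpace cs) :
    Zcoeff cs n (x ∘ Fin.castSucc) D = diffProd n (fun k => chamberSide cs D (pp x k)) :=
  diffProd_congr fun _ hk => by rw [pp_comp_castSucc x hk]

theorem Zcoeff_comp_succ_halfSpaceAct (cs : CoxeterSystem M W) {n : ℕ} (x : Fin (n + 1) → W)
    (D : HalfSpace cs) :
    Zcoeff cs n (x ∘ Fin.succ) (halfSpaceAct cs (x 0)⁻¹ D)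
      = diffProd n (fun k => chamberSide cs D (pp x (k + 1))) :=
  diffProd_congr fun _ _ => by
    rw [cs.chamberSide_halfSpaceAct, inv_inv, pp_succ_eq_mul_pp_comp_succ]

theorem Zcoeff_contract (cs : CoxeterSystem M W) {n : ℕ} (x : Fin (n + 1) → W) (j : Fin n)
    (D : HalfSpace cs) :
    Zcoeff cs n (contract x j) D
      = diffProd n (fun k => chamberSide cs D (pp x (if k ≤ j then k else k + 1))) :=
  diffProd_congr fun _ hk => by rw [pp_contract x j hk]

/-- The identity is stated coefficientwise: the coefficient of `[D]` in `x₁ · Zₙ(x₂,…,x_{n+1})`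
is the coefficient of `[x₁⁻¹ · D]` in `Zₙ(x₂,…,x_{n+1})`. -/
theorem Z_is_cocycle (cs : CoxeterSystem M W) (n : ℕ) (x : Fin (n + 1) → W)
    (D : HalfSpace cs) :
    Zcoeff cs n (x ∘ Fin.succ) (halfSpaceAct cs (x 0)⁻¹ D)
      + ∑ j : Fin n, ((-1 : ℤ) ^ ((j : ℕ) + 1)) * Zcoeff cs n (contract x j) D
      + ((-1 : ℤ) ^ (n + 1)) * Zcoeff cs n (x ∘ Fin.castSucc) D = 0 := by
  rw [Zcoeff_comp_succ_halfSpaceAct, Zcoeff_comp_castSucc]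
  simp only [Zcoeff_contract]
  exact diffProd_coboundary n (fun k => chamberSide cs D (pp x k))
end

section
/- For each $s \in S$ and $n \ge 1$, $Z_n^W(s, s, \ldots, s) = (-1)^{\lfloor n/2 \rfloor}[D_s^+] + (-1)^{\lfloor (n+1)/2 \rfloor}[D_s^-]$. -/
/-!
The prefix products of `(s, …, s)` alternate between `1` and `s`, i.e. the chambers
`Cᵢ` alternate between `C₀` and `sC₀`. These two chambers are separated only by the wall
`H_s` (if `ℓ(ts) < ℓ(s) = 1` then `ts = 1`), so for any other wall the first factor of the
product vanishes, whereas for `D = D_s^±` every factor is `±(-1)^k`, giving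
`(±1)^n ∏_{k<n} (-1)^k = (±1)^n (-1)^⌊n/2⌋`.
-/

open CoxeterSystem

variable {B W : Type*} [Group W] {M : CoxeterMatrix B}

lemma neg_one_pow_div_two_mul_neg_one_pow (n : ℕ) :
    (-1 : ℤ) ^ (n / 2) * (-1) ^ n = (-1) ^ ((n + 1) / 2) := by
  obtain ⟨m, rfl | rfl⟩ := Nat.even_or_odd' n
  · rw [show (2 * m + 1) / 2 = 2 * m / 2 by omega, pow_mul, neg_one_sq, one_pow, mul_one]
  · rw [show (2 * m + 1 + 1) / 2 = (2 * m + 1) / 2 + 1 by omega, pow_succ _ ((2 * m + 1) / 2),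
      pow_succ _ (2 * m), pow_mul, neg_one_sq, one_pow, one_mul]

lemma prod_range_neg_one_pow (n : ℕ) :
    ∏ k ∈ Finset.range n, (-1 : ℤ) ^ k = (-1) ^ (n / 2) := by
  induction n with
  | zero => simp
  | succ n ih => rw [Finset.prod_range_succ, ih, neg_one_pow_div_two_mul_neg_one_pow]

lemma pp_const {n k : ℕ} (x : W) (hk : k ≤ n) : pp (fun _ : Fin n => x) k = x ^ k := by
  rw [pp, List.ofFn_const, List.take_replicate, List.prod_replicate, min_eq_left hk]

namespace CoxeterSystem

variable (cs : CoxeterSystem M W)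

lemma simple_pow_two_mul (i : B) (m : ℕ) : cs.simple i ^ (2 * m) = 1 := by
  rw [pow_mul, simple_sq, one_pow]

lemma simple_pow_two_mul_add_one (i : B) (m : ℕ) : cs.simple i ^ (2 * m + 1) = cs.simple i := by
  rw [pow_succ, simple_pow_two_mul, one_mul]

end CoxeterSystem

section HalfSpace

variable (cs : CoxeterSystem M W)

lemma Zcoeff_const (n : ℕ) (x : W) (D : HalfSpace cs) :
    Zcoeff cs n (fun _ => x) D =
      ∏ k ∈ Finset.range n, (chamberSide cs D (x ^ k) - chamberSide cs D (x ^ (k + 1))) :=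
  Finset.prod_congr rfl fun _ hk => by
    rw [pp_const x (Finset.mem_range.mp hk).le, pp_const x (Finset.mem_range.mp hk)]

lemma chamberSide_one (D : HalfSpace cs) : chamberSide cs D 1 = if D.2 then 0 else 1 := by
  rcases D with ⟨t, _ | _⟩ <;> simp [chamberSide]

lemma chamberSide_simple_of_wall_eq {i : B} {D : HalfSpace cs} (hD : D.1.1 = cs.simple i) :
    chamberSide cs D (cs.simple i) = if D.2 then 1 else 0 := by
  rcases D with ⟨t, _ | _⟩ <;> simp_all [chamberSide, cs.simple_mul_simple_self]

lemma chamberSide_simple_of_wall_ne {i : B} {D : HalfSpace cs} (hD : D.1.1 ≠ cs.simple i) :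
    chamberSide cs D (cs.simple i) = chamberSide cs D 1 := by
  have hlen : ¬ cs.length (D.1.1 * cs.simple i) < 1 := by
    rwa [Nat.lt_one_iff, cs.length_eq_zero_iff, mul_eq_one_iff_eq_inv, cs.inv_simple]
  simp [chamberSide, hlen]

lemma chamberSide_simple_pow_sub {i : B} {D : HalfSpace cs} (hD : D.1.1 = cs.simple i) (k : ℕ) :
    chamberSide cs D (cs.simple i ^ k) - chamberSide cs D (cs.simple i ^ (k + 1)) =
      (if D.2 then -1 else 1) * (-1) ^ k := by
  obtain ⟨m, rfl | rfl⟩ := Nat.even_or_odd' k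
  · rw [cs.simple_pow_two_mul, cs.simple_pow_two_mul_add_one, chamberSide_one,
      chamberSide_simple_of_wall_eq cs hD, pow_mul, neg_one_sq, one_pow]
    cases D.2 <;> simp
  · rw [cs.simple_pow_two_mul_add_one, show 2 * m + 1 + 1 = 2 * (m + 1) by ring,
      cs.simple_pow_two_mul, chamberSide_one, chamberSide_simple_of_wall_eq cs hD, pow_succ,
      pow_mul, neg_one_sq, one_pow]
    cases D.2 <;> simp

end HalfSpace

open scoped Classical in
/-- For a simple reflection `s` and `n ≥ 1`,
`Z_n^W(s, s, …, s) = (-1)^{⌊n/2⌋}[D_s^+] + (-1)^{⌊(n+1)/2⌋}[D_s^-]`,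
expressed coefficientwise on `ℤ[𝒟]`; here `D_s^+` is `(s, false)` (the half-space
bounded by the wall `H_s` containing the fundamental chamber) and `D_s^-` is `(s, true)`. -/
theorem Z_apply_const_simple (cs : CoxeterSystem M W) (n : ℕ) (hn : 1 ≤ n) (i : B)
    (D : HalfSpace cs) :
    Zcoeff cs n (fun _ => cs.simple i) D =
      (-1 : ℤ) ^ (n / 2) * (if D.1.1 = cs.simple i ∧ D.2 = false then 1 else 0)
        + (-1 : ℤ) ^ ((n + 1) / 2) * (if D.1.1 = cs.simple i ∧ D.2 = true then 1 else 0) := by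
  rw [Zcoeff_const]
  by_cases hD : D.1.1 = cs.simple i
  · rw [Finset.prod_congr rfl fun k _ => chamberSide_simple_pow_sub cs hD k,
      Finset.prod_mul_distrib, Finset.prod_const, Finset.card_range, prod_range_neg_one_pow,
      ← neg_one_pow_div_two_mul_neg_one_pow]
    rcases D with ⟨⟨t, ht⟩, _ | _⟩ <;> dsimp only at hD <;> simp [hD, mul_comm]
  · obtain ⟨n, rfl⟩ := Nat.exists_eq_add_of_le' hn
    rw [Finset.prod_range_succ', pow_zero, pow_one, chamberSide_simple_of_wall_ne cs hD,
      sub_self, mul_zero]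
    simp [hD]
end

section
/- Let $n \ge 2$, $A$ a $\mathbb{Z}[W]$-module, and $\zeta \in Z^n(W,A)$ a collapsing cocycle. Then for every $s \in S$, $s \cdot \zeta(s,\ldots,s) = (-1)^n \zeta(s,\ldots,s)$. -/
open CoxeterSystem

variable {B W : Type*} [Group W] {M : CoxeterMatrix B}

theorem contract_const {n : ℕ} (g : W) (j : Fin n) :
    contract (fun _ : Fin (n + 1) => g) j = Function.update (fun _ => g) j (g * g) := by
  funext k
  by_cases h : k = j
  · subst h
    simp [contract]
  · simp [contract, h]

theorem Collapsing.apply_eq_zero_of_eq_one {cs : CoxeterSystem M W} {A : Type*} [AddCommGroup A]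
    {n : ℕ} {ζ : (Fin n → W) → A} (hcol : Collapsing cs n ζ) (hn : 2 ≤ n) {x : Fin n → W}
    {j : Fin n} (hj : x j = 1) : ζ x = 0 := by
  by_cases hlast : (j : ℕ) + 1 < n
  · exact hcol x j hlast (by rw [hj, one_mul, cs.length_one, zero_add])
  · have hlt : n - 2 + 1 < n := by omega
    have hsucc : (⟨n - 2 + 1, hlt⟩ : Fin n) = j := Fin.ext (by simp only; omega)
    refine hcol x ⟨n - 2, by omega⟩ hlt ?_
    rw [hsucc, hj, mul_one, cs.length_one, add_zero]

/-- In the cocycle identity at `(w, …, w)` every inner face has an entry `w * w = 1`, so only the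
two outer faces survive. -/
theorem IsCocycleM.smul_const_of_mul_self_eq_one {cs : CoxeterSystem M W} {A : Type*}
    [AddCommGroup A] [DistribMulAction W A] {n : ℕ} {ζ : (Fin n → W) → A}
    (hcoc : IsCocycleM n ζ) (hcol : Collapsing cs n ζ) (hn : 2 ≤ n) {w : W} (hw : w * w = 1) :
    w • ζ (fun _ => w) = ((-1 : ℤ) ^ n) • ζ (fun _ => w) := by
  have hinner : ∀ j : Fin n, ζ (contract (fun _ => w) j) = 0 := fun j =>
    hcol.apply_eq_zero_of_eq_one hn (j := j) (by rw [contract_const, Function.update_self, hw])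
  have h := hcoc (fun _ => w)
  simp only [hinner, smul_zero, Finset.sum_const_zero, add_zero, Function.comp_def] at h
  rwa [pow_succ, mul_neg_one, neg_smul, ← sub_eq_add_neg, sub_eq_zero] at h

/-- Let `ζ ∈ Zⁿ(W, A)` be a collapsing cocycle (`n ≥ 2`) valued in a `ℤ[W]`-module `A`.
Then for every simple reflection `s`, `s • ζ(s, …, s) = (-1)ⁿ ζ(s, …, s)`. -/
theorem simple_smul_const_simple_value (cs : CoxeterSystem M W) (n : ℕ) (hn : 2 ≤ n)
    {A : Type*} [AddCommGroup A] [DistribMulAction W A]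
    (ζ : (Fin n → W) → A) (hcoc : IsCocycleM n ζ) (hcol : Collapsing cs n ζ) (i : B) :
    cs.simple i • ζ (fun _ => cs.simple i) =
      ((-1 : ℤ) ^ n) • ζ (fun _ => cs.simple i) :=
  hcoc.smul_const_of_mul_self_eq_one hcol hn (cs.simple_mul_simple_self i)
end

section
/- Let $n \ge 2$, $A$ a $\mathbb{Z}[W]$-module, and $\xi \in Z^n(W,A)$ a collapsing $n$-cocycle such that $\xi(s,\ldots,s) = 0$ for all $s \in S$. Then $\xi$ is identically zero. -/
open CoxeterSystem

variable {B W : Type*} [Group W] {M : CoxeterMatrix B}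

/-!
Induct on the total length `ℓ(x₀) + ⋯ + ℓ(x_{n-1})` and, for fixed total length, downwards on
the number of leading entries that are simple reflections. A tuple of simple reflections is
either constant, `(s, …, s)`, or has two consecutive entries `t ≠ t'`, where `ℓ(t t') = 2`
collapses `ξ`. Otherwise let `x_p` be the first entry of length `≥ 2` (an entry `1` collapses
`ξ`) and pick a left descent `s` of `x_p`, taking `s = x_{p-1}` when `p > 0` (if `x_{p-1}` is not
a left descent, `ξ` collapses at `(x_{p-1}, x_p)`). Write `x_p = s y` with `ℓ(x_p) = 1 + ℓ(y)`
and evaluate the cocycle identity at `(x₀, …, x_{p-1}, s, y, x_{p+1}, …)`: both outer faces have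
smaller total length, the faces keeping `s, y` adjacent collapse, the face with `x_{p-1} s = 1`
collapses, and the face with `y x_{p+1}` has no larger total length and a longer simple prefix.
Only the face `x` survives, so `ξ x = 0`.
-/

section Contract

variable {n : ℕ} (z : Fin (n + 1) → W) (j : Fin n)

theorem contract_apply_of_lt {i : Fin n} (h : (i : ℕ) < j) : contract z j i = z i.castSucc :=
  if_pos h

theorem contract_apply_self : contract z j j = z j.castSucc * z j.succ := by
  simp [contract]

theorem contract_apply_of_gt {i : Fin n} (h : (j : ℕ) < i) : contract z j i = z i.succ := by
  simp [contract, h.not_gt, (Fin.lt_def.mpr h).ne']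

theorem contract_eq_update :
    contract z j = Function.update (z ∘ j.succ.succAbove) j (z j.castSucc * z j.succ) := by
  funext i
  rcases lt_trichotomy (i : ℕ) j with h | h | h
  · rw [contract_apply_of_lt z j h, Function.update_of_ne (Fin.ne_of_lt h),
      Function.comp_apply, Fin.succAbove_succ_of_le _ _ (Fin.le_of_lt h)]
  · rw [Fin.ext h, contract_apply_self, Function.update_self]
  · rw [contract_apply_of_gt z j h, Function.update_of_ne (Fin.ne_of_gt h),
      Function.comp_apply, Fin.succAbove_succ_of_lt _ _ h]

end Contract

section ExpandAt

variable {α : Type*} {n : ℕ}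

/-- `(x₀, …, x_{p-1}, a, b, x_{p+1}, …, x_{n-1})`. -/
def expandAt (x : Fin n → α) (p : Fin n) (a b : α) : Fin (n + 1) → α :=
  fun k =>
    if h : (k : ℕ) < p then x ⟨k, h.trans p.isLt⟩
    else if (k : ℕ) = p then a
    else if (k : ℕ) = p + 1 then b
    else x ⟨k - 1, by omega⟩

variable (x : Fin n → α) (p : Fin n) (a b : α) {k : Fin (n + 1)}

theorem expandAt_of_lt (h : (k : ℕ) < p) : expandAt x p a b k = x ⟨k, h.trans p.isLt⟩ :=
  dif_pos h

theorem expandAt_of_eq (h : (k : ℕ) = p) : expandAt x p a b k = a := by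
  simp [expandAt, h]

theorem expandAt_of_eq_add_one (h : (k : ℕ) = p + 1) : expandAt x p a b k = b := by
  simp [expandAt, h]

theorem expandAt_of_gt (h : (p : ℕ) + 1 < k) :
    expandAt x p a b k = x ⟨k - 1, by omega⟩ := by
  simp [expandAt, show ¬ (k : ℕ) < p by omega, show (k : ℕ) ≠ p by omega, h.ne']

theorem expandAt_ne {c : α} (hx : ∀ i, x i ≠ c) (ha : a ≠ c) (hb : b ≠ c) (k : Fin (n + 1)) :
    expandAt x p a b k ≠ c := by
  unfold expandAt
  split_ifs <;> simp_all

theorem contract_expandAt_self (x : Fin n → W) (p : Fin n) {a b : W} (hab : a * b = x p) :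
    contract (expandAt x p a b) p = x := by
  funext i
  rcases lt_trichotomy (i : ℕ) p with h | h | h
  · rw [contract_apply_of_lt _ _ h, expandAt_of_lt _ _ _ _ h]
    rfl
  · rw [Fin.ext h, contract_apply_self, expandAt_of_eq _ _ _ _ rfl,
      expandAt_of_eq_add_one _ _ _ _ rfl, hab]
  · rw [contract_apply_of_gt _ _ h, expandAt_of_gt _ _ _ _ (by simpa using h)]
    simp

end ExpandAt

theorem IsCocycleM.eq_zero_of_forall_ne {A : Type*} [AddCommGroup A] [DistribMulAction W A]
    {n : ℕ} {ξ : (Fin n → W) → A} (hcoc : IsCocycleM n ξ) (z : Fin (n + 1) → W) (p : Fin n)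
    (hhead : ξ (z ∘ Fin.succ) = 0) (htail : ξ (z ∘ Fin.castSucc) = 0)
    (hother : ∀ j ≠ p, ξ (contract z j) = 0) : ξ (contract z p) = 0 := by
  have h := hcoc z
  rw [Finset.sum_eq_single p (fun j _ hj => by rw [hother j hj, smul_zero]) (by simp),
    hhead, htail] at h
  simpa using h


namespace CoxeterSystem

variable (cs : CoxeterSystem M W)

noncomputable def totalLength {m : ℕ} (x : Fin m → W) : ℕ :=
  ∑ k, cs.length (x k)

variable {n : ℕ} (z : Fin (n + 1) → W)

theorem totalLength_contract_add (j : Fin n) :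
    cs.totalLength (contract z j) + cs.length (z j.castSucc) + cs.length (z j.succ) =
      cs.totalLength z + cs.length (z j.castSucc * z j.succ) := by
  classical
  have hz : cs.totalLength z = cs.length (z j.succ) + ∑ i, cs.length (z (j.succ.succAbove i)) :=
    Fin.sum_univ_succAbove _ j.succ
  have hsplit := Finset.add_sum_erase Finset.univ (fun i => cs.length (z (j.succ.succAbove i)))
    (Finset.mem_univ j)
  have hcontract : cs.totalLength (contract z j) = cs.length (z j.castSucc * z j.succ) +
      ∑ i ∈ Finset.univ \ {j}, cs.length (z (j.succ.succAbove i)) := by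
    rw [totalLength, contract_eq_update, ← Finset.sum_update_of_mem (Finset.mem_univ j)]
    exact Finset.sum_congr rfl fun i _ => (Function.apply_update (fun _ => cs.length) _ j _ i)
  rw [Fin.succAbove_succ_self, ← Finset.sdiff_singleton_eq_erase] at hsplit
  omega

theorem totalLength_contract_le (j : Fin n) :
    cs.totalLength (contract z j) ≤ cs.totalLength z := by
  have := cs.totalLength_contract_add z j
  have := cs.length_mul_le (z j.castSucc) (z j.succ)
  omega

theorem totalLength_comp_succ_lt (h : z 0 ≠ 1) :
    cs.totalLength (z ∘ Fin.succ) < cs.totalLength z := by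
  have hz : cs.totalLength z = _ := Fin.sum_univ_succ fun k => cs.length (z k)
  have := cs.length_eq_zero_iff.not.mpr h
  rw [hz, totalLength]
  simp only [Function.comp_apply]
  omega

theorem totalLength_comp_castSucc_lt (h : z (Fin.last n) ≠ 1) :
    cs.totalLength (z ∘ Fin.castSucc) < cs.totalLength z := by
  have hz : cs.totalLength z = _ := Fin.sum_univ_castSucc fun k => cs.length (z k)
  have := cs.length_eq_zero_iff.not.mpr h
  rw [hz, totalLength]
  simp only [Function.comp_apply]
  omega

theorem totalLength_expandAt (x : Fin n → W) (p : Fin n) {a b : W} (hab : a * b = x p)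
    (hlen : cs.length (a * b) = cs.length a + cs.length b) :
    cs.totalLength (expandAt x p a b) = cs.totalLength x := by
  have := cs.totalLength_contract_add (expandAt x p a b) p
  rw [contract_expandAt_self x p hab, expandAt_of_eq x p a b rfl,
    expandAt_of_eq_add_one x p a b rfl] at this
  omega

theorem eq_simple_of_isLeftDescent_of_length_eq_one {w : W} {s : B}
    (hw : cs.length w = 1) (hs : cs.IsLeftDescent w s) : w = cs.simple s := by
  have h : cs.simple s * w = 1 := cs.length_eq_zero_iff.mp (by unfold IsLeftDescent at hs; omega)
  rw [eq_inv_of_mul_eq_one_right h, inv_simple]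

end CoxeterSystem

namespace Collapsing

variable {cs : CoxeterSystem M W} {A : Type*} [AddCommGroup A] {n : ℕ} {ξ : (Fin n → W) → A}

theorem eq_zero_of_not_isLeftDescent (hcol : Collapsing cs n ξ) (x : Fin n → W) {i j : Fin n}
    (hij : (j : ℕ) = i + 1) {s : B} (hi : x i = cs.simple s)
    (hj : ¬ cs.IsLeftDescent (x j) s) : ξ x = 0 := by
  apply hcol x i (by omega)
  rw [show (⟨i + 1, _⟩ : Fin n) = j from Fin.ext hij.symm, hi, cs.length_simple,
    cs.not_isLeftDescent_iff.mp hj, add_comm]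

theorem eq_zero_of_apply_eq_one (hcol : Collapsing cs n ξ) (hn : 2 ≤ n) (x : Fin n → W)
    {k : Fin n} (hk : x k = 1) : ξ x = 0 := by
  by_cases h : (k : ℕ) + 1 < n
  · exact hcol x k h (by simp [hk])
  · exact hcol x ⟨n - 2, by omega⟩ (by simp; omega)
      (by rw [show (⟨n - 2 + 1, _⟩ : Fin n) = k by ext; simp; omega, hk]; simp)

theorem eq_zero_of_forall_length_eq_one (hcol : Collapsing cs n ξ) (hn : 2 ≤ n)
    (hs : ∀ i : B, ξ (fun _ => cs.simple i) = 0) (x : Fin n → W)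
    (hx : ∀ k, cs.length (x k) = 1) : ξ x = 0 := by
  obtain ⟨s, hx0⟩ := cs.length_eq_one_iff.mp (hx ⟨0, by omega⟩)
  by_contra hξ
  have hconst : ∀ m (hm : m < n), x ⟨m, hm⟩ = cs.simple s := by
    intro m
    induction m with
    | zero => exact fun _ => hx0
    | succ m ih =>
      intro hm
      by_contra hne
      exact hξ (hcol.eq_zero_of_not_isLeftDescent x (i := ⟨m, by omega⟩) rfl (ih (by omega))
        fun hd => hne (cs.eq_simple_of_isLeftDescent_of_length_eq_one (hx _) hd))
  exact hξ (by rw [show x = fun _ => cs.simple s from funext fun k => hconst k k.isLt]; exact hs s)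

theorem contract_expandAt_eq_zero (hcol : Collapsing cs n ξ) (hn : 2 ≤ n) (x : Fin n → W)
    {p : Fin n} {s : B} {y : W} (hprev : ∀ k : Fin n, (k : ℕ) + 1 = p → x k = cs.simple s)
    (hy : ¬ cs.IsLeftDescent y s) {j : Fin n} (hjp : j ≠ p) (hj : (j : ℕ) ≠ p + 1) :
    ξ (contract (expandAt x p (cs.simple s) y) j) = 0 := by
  rcases lt_trichotomy ((j : ℕ) + 1) p with h | h | h
  · refine hcol.eq_zero_of_not_isLeftDescent _ (i := ⟨p - 1, by omega⟩) (j := p) (s := s)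
      (by simp; omega) ?_ ?_
    · rw [contract_apply_of_gt _ _ (by simp; omega), expandAt_of_eq _ _ _ _ (by simp; omega)]
    · rwa [contract_apply_of_gt _ _ (by omega), expandAt_of_eq_add_one _ _ _ _ (by simp)]
  · apply hcol.eq_zero_of_apply_eq_one hn _ (k := j)
    rw [contract_apply_self, expandAt_of_lt _ _ _ _ (by simp; omega),
      expandAt_of_eq _ _ _ _ (by simpa using h), hprev _ (by simpa using h), simple_mul_simple_self]
  · have hpj : (p : ℕ) + 1 < j := by have := Fin.val_ne_of_ne hjp; omega
    refine hcol.eq_zero_of_not_isLeftDescent _ (i := p) (j := ⟨p + 1, by omega⟩) (s := s) rfl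
      ?_ ?_
    · rw [contract_apply_of_lt _ _ (by omega), expandAt_of_eq _ _ _ _ rfl]
    · rwa [contract_apply_of_lt _ _ (by simp; omega), expandAt_of_eq_add_one _ _ _ _ rfl]

end Collapsing

section Descent

variable (cs : CoxeterSystem M W) {n : ℕ} {A : Type*} [AddCommGroup A] [DistribMulAction W A]
  {ξ : (Fin n → W) → A} {p : Fin n}

theorem eq_zero_of_isLeftDescent (hn : 2 ≤ n) (hcoc : IsCocycleM n ξ) (hcol : Collapsing cs n ξ)
    (x : Fin n → W) {s : B} (hdesc : cs.IsLeftDescent (x p) s)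
    (hlen : 2 ≤ cs.length (x p)) (hprefix : ∀ k : Fin n, (k : ℕ) < p → cs.length (x k) = 1)
    (hprev : ∀ k : Fin n, (k : ℕ) + 1 = p → x k = cs.simple s) (hne : ∀ k, x k ≠ 1)
    (hshorter : ∀ w, cs.totalLength w < cs.totalLength x → ξ w = 0)
    (hprefix_succ : ∀ w, cs.totalLength w = cs.totalLength x →
      (∀ k : Fin n, (k : ℕ) ≤ p → cs.length (w k) = 1) → ξ w = 0) :
    ξ x = 0 := by
  set y := cs.simple s * x p
  have hsy : cs.simple s * y = x p := cs.simple_mul_simple_cancel_left s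
  have hly : cs.length y + 1 = cs.length (x p) := cs.isLeftDescent_iff.mp hdesc
  have hy : ¬ cs.IsLeftDescent y s := cs.isLeftDescent_iff_not_isLeftDescent_mul.mp hdesc
  set z := expandAt x p (cs.simple s) y with hz_def
  have hz : cs.totalLength z = cs.totalLength x :=
    cs.totalLength_expandAt x p hsy (by rw [hsy, cs.length_simple]; omega)
  have hz1 : ∀ k, z k ≠ 1 :=
    expandAt_ne x p _ _ hne (fun h => by simpa [h] using cs.length_simple s)
      fun h => by rw [h, length_one] at hly; omega
  rw [← contract_expandAt_self x p hsy]
  refine hcoc.eq_zero_of_forall_ne z p (hshorter _ (hz ▸ cs.totalLength_comp_succ_lt z (hz1 0)))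
    (hshorter _ (hz ▸ cs.totalLength_comp_castSucc_lt z (hz1 _))) fun j hjp => ?_
  by_cases hj : (j : ℕ) = p + 1
  · -- the contracted tuple starts with `x₀, …, x_{p-1}, s`
    rcases (cs.totalLength_contract_le z j).lt_or_eq with hlt | heq
    · exact hshorter _ (hz ▸ hlt)
    refine hprefix_succ _ (heq.trans hz) fun k hk => ?_
    rw [contract_apply_of_lt _ _ (by omega), hz_def]
    rcases hk.lt_or_eq with hk | hk
    · rw [expandAt_of_lt _ _ _ _ hk]
      exact hprefix _ hk
    · rw [expandAt_of_eq _ _ _ _ hk, cs.length_simple]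
  · exact hcol.contract_expandAt_eq_zero hn x hprev hy hjp hj

theorem eq_zero_of_two_le_length (hn : 2 ≤ n) (hcoc : IsCocycleM n ξ)
    (hcol : Collapsing cs n ξ) (x : Fin n → W) (hlen : 2 ≤ cs.length (x p))
    (hprefix : ∀ k : Fin n, (k : ℕ) < p → cs.length (x k) = 1) (hne : ∀ k, x k ≠ 1)
    (hshorter : ∀ w, cs.totalLength w < cs.totalLength x → ξ w = 0)
    (hprefix_succ : ∀ w, cs.totalLength w = cs.totalLength x →
      (∀ k : Fin n, (k : ℕ) ≤ p → cs.length (w k) = 1) → ξ w = 0) :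
    ξ x = 0 := by
  by_cases hp : (p : ℕ) = 0
  · obtain ⟨s, hdesc⟩ := cs.exists_leftDescent_of_ne_one (hne p)
    exact eq_zero_of_isLeftDescent cs hn hcoc hcol x hdesc hlen hprefix (fun k hk => by omega)
      hne hshorter hprefix_succ
  let q : Fin n := ⟨p - 1, by omega⟩
  obtain ⟨s, hs⟩ := cs.length_eq_one_iff.mp (hprefix q (by simp [q]; omega))
  by_cases hdesc : cs.IsLeftDescent (x p) s
  · refine eq_zero_of_isLeftDescent cs hn hcoc hcol x hdesc hlen hprefix (fun k hk => ?_)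
      hne hshorter hprefix_succ
    rw [show k = q by ext; simp [q]; omega, hs]
  · exact hcol.eq_zero_of_not_isLeftDescent x (by simp [q]; omega) hs hdesc

end Descent

/-- Let `ξ ∈ Zⁿ(W, A)` be a collapsing `n`-cocycle (`n ≥ 2`) valued in a `ℤ[W]`-module
`A` such that `ξ(s, …, s) = 0` for all simple reflections `s`.  Then `ξ` is identically
zero. -/
theorem collapsing_cocycle_eq_zero (cs : CoxeterSystem M W) (n : ℕ) (hn : 2 ≤ n)
    {A : Type*} [AddCommGroup A] [DistribMulAction W A]
    (ξ : (Fin n → W) → A) (hcoc : IsCocycleM n ξ) (hcol : Collapsing cs n ξ)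
    (hs : ∀ i : B, ξ (fun _ => cs.simple i) = 0) :
    ∀ x : Fin n → W, ξ x = 0 := by
  intro x
  induction hN : cs.totalLength x using Nat.strong_induction_on generalizing x with
  | _ N ih_length =>
  suffices hprefix : ∀ m ≤ n, ∀ w, cs.totalLength w = N →
      (∀ k : Fin n, (k : ℕ) < m → cs.length (w k) = 1) → ξ w = 0 from
    hprefix 0 n.zero_le x hN fun k hk => absurd hk k.val.not_lt_zero
  intro m hm
  induction hm using Nat.decreasingInduction with
  | self =>
    exact fun w _ hw => hcol.eq_zero_of_forall_length_eq_one hn hs w fun k => hw k k.isLt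
  | of_succ m hm ih_prefix =>
    intro w hw hwm
    by_cases hone : ∃ k, w k = 1
    · obtain ⟨k, hk⟩ := hone
      exact hcol.eq_zero_of_apply_eq_one hn w hk
    push Not at hone
    have hpos := cs.length_eq_zero_iff.not.mpr (hone ⟨m, hm⟩)
    by_cases h1 : cs.length (w ⟨m, hm⟩) = 1
    · refine ih_prefix w hw fun k hk => ?_
      rcases Nat.lt_succ_iff_lt_or_eq.mp hk with hk | hk
      · exact hwm k hk
      · rwa [show k = ⟨m, hm⟩ from Fin.ext hk]
    · exact eq_zero_of_two_le_length cs hn hcoc hcol w (p := ⟨m, hm⟩) (by omega) hwm hone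
        (fun v hv => ih_length _ (hw ▸ hv) v rfl)
        fun v hv hv' => ih_prefix v (hv.trans hw) fun k hk => hv' k (by simp; omega)
end

section
/- For all $x, y \in W$, $\epsilon_2^W(x,y) = \frac{1}{2}(|x| + |y| - |xy|) \in \mathbb{Z}$. In particular, $|x| + |y| - |xy|$ is always even, $\epsilon_2^W$ is a $\mathbb{Z}$-valued 2-cocycle, and it vanishes exactly when lengths add. -/
/-! Following Bourbaki, the Coxeter relations let `s ↦ (δ_s, s)`, with `δ_s` equal to `-1` at
`s` and `1` elsewhere, extend to a homomorphism `W →* (W → ℤˣ) ⋊ W`: they hold because the left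
inversion sequence of the braid word `(ij)^m` lists each reflection an even number of times.
The first component `η` satisfies `η(uv, t) = η(u, t) η(v, u⁻¹tu)`, and on a word `ω` it is `-1`
to the multiplicity of `t` in the left inversion sequence of `ω`.  Hence `t` is a left inversion
of `w` iff `η(w, t) = -1`, so the inversion set `N(w)` has `ℓ(w)` elements and
`N(xy) = N(x) ∆ xN(y)x⁻¹`; comparing cardinalities, `ℓ(xy) = ℓ(x) + ℓ(y) - 2 |N(x) ∩ xN(y)x⁻¹|`,
and the last cardinality is `ε₂(x, y)`. -/

open CoxeterSystem

variable {B W : Type*} [Group W] {M : CoxeterMatrix B}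

/-- `ε₂^W(x,y)`: the number of walls `H` such that `(C₀, xC₀, xyC₀)` is
`H`-alternating, i.e. the number of reflections `t ∈ 𝐓_x ∩ x𝐓_y`. -/
noncomputable def epsTwo (cs : CoxeterSystem M W) (x y : W) : ℤ :=
  (({t : W | cs.IsLeftInversion x t} ∩
    {t : W | cs.IsLeftInversion y (x⁻¹ * t * x)}).ncard : ℤ)

theorem Set.ncard_symmDiff_add_two_mul_ncard_inter {α : Type*} {s t : Set α} (hs : s.Finite)
    (ht : t.Finite) : (symmDiff s t).ncard + 2 * (s ∩ t).ncard = s.ncard + t.ncard := by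
  have hdiff := Set.ncard_sdiff_add_ncard_of_subset
    (Set.inter_subset_left.trans Set.subset_union_left : s ∩ t ⊆ s ∪ t) (hs.union ht)
  rw [← show symmDiff s t = (s ∪ t) \ (s ∩ t) from symmDiff_eq_sup_sdiff_inf s t] at hdiff
  have := Set.ncard_union_add_ncard_inter s t hs ht
  omega

theorem isCocycle_two_of_two_mul_eq {G : Type*} [Group G] {ζ : G → G → ℤ} (f : G → ℤ)
    (h : ∀ x y, 2 * ζ x y = f x + f y - f (x * y)) :
    IsCocycle 2 fun x : Fin 2 → G => ζ (x 0) (x 1) := by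
  intro x
  have h012 := h (x 0 * x 1) (x 2)
  rw [mul_assoc] at h012
  have hδ : ζ (x 1) (x 2) - ζ (x 0 * x 1) (x 2) + ζ (x 0) (x 1 * x 2) - ζ (x 0) (x 1) = 0 := by
    linarith [h (x 1) (x 2), h (x 0) (x 1 * x 2), h (x 0) (x 1)]
  simpa [contract, Fin.sum_univ_two, sub_eq_add_neg, add_assoc] using hδ

namespace CoxeterSystem

open scoped Classical

variable (cs : CoxeterSystem M W)

local prefix:100 "s " => cs.simple
local prefix:100 "π " => cs.wordProd
local prefix:100 "lis " => cs.leftInvSeq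

theorem prod_map_alternatingWord_two_mul {G : Type*} [Monoid G] (f : B → G) (i j : B) (p : ℕ) :
    ((alternatingWord i j (2 * p)).map f).prod = (f i * f j) ^ p := by
  induction p with
  | zero => simp [alternatingWord]
  | succ p ih =>
    have hword : alternatingWord i j (2 * (p + 1)) = i :: j :: alternatingWord i j (2 * p) := by
      rw [show 2 * (p + 1) = 2 * p + 1 + 1 by ring, alternatingWord_succ', alternatingWord_succ']
      simp
    rw [hword, List.map_cons, List.map_cons, List.prod_cons, List.prod_cons, ih, ← mul_assoc,
      ← pow_succ']

theorem leftInvSeq_alternatingWord_two_mul (i j : B) (p : ℕ) :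
    lis (alternatingWord i j (2 * p)) =
      (List.range (2 * p)).map fun k => s i * (s j * s i) ^ k := by
  refine List.ext_getElem (by simp) fun k hk _ => ?_
  rw [getElem_leftInvSeq_alternatingWord cs i j p k (by simpa using hk),
    prod_alternatingWord_eq_mul_pow]
  simp [Nat.not_even_bit1, show (2 * k + 1) / 2 = k by omega]

theorem even_count_leftInvSeq_braid (i j : B) (t : W) :
    Even ((lis (alternatingWord i j (2 * M i j))).count t) := by
  have hperiod (k : ℕ) : s i * (s j * s i) ^ (M i j + k) = s i * (s j * s i) ^ k := by
    rw [pow_add, simple_mul_simple_pow', one_mul]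
  rw [leftInvSeq_alternatingWord_two_mul, two_mul, List.range_add, List.map_append,
    List.map_map, Function.comp_def]
  simp only [hperiod, List.count_append]
  exact ⟨_, rfl⟩

def conjArrow (W : Type*) [Group W] : W →* MulAut (W → ℤˣ) :=
  (mulAutArrow : ConjAct W →* MulAut (W → ℤˣ)).comp ConjAct.toConjAct.toMonoidHom

@[simp]
theorem conjArrow_apply (w : W) (f : W → ℤˣ) (t : W) : conjArrow W w f t = f (w⁻¹ * t * w) := by
  change f ((ConjAct.toConjAct w)⁻¹ • t) = _
  simp [ConjAct.smul_def]

noncomputable def etaGen (i : B) : (W → ℤˣ) ⋊[conjArrow W] W :=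
  ⟨fun t => if t = s i then -1 else 1, s i⟩

theorem prod_map_etaGen (ω : List B) :
    (ω.map cs.etaGen).prod = ⟨fun t => (-1) ^ (lis ω).count t, π ω⟩ := by
  induction ω with
  | nil => rfl
  | cons i ω ih =>
    rw [List.map_cons, List.prod_cons, ih]
    refine SemidirectProduct.ext (funext fun t => ?_) ?_
    · have hconj : ((lis ω).map (MulAut.conj (s i))).count t = (lis ω).count (s i * t * s i) := by
        simpa [mul_assoc] using
          List.count_map_of_injective (lis ω) _ (MulAut.conj (s i)).injective (s i * t * s i)
      have hcount :
          (lis (i :: ω)).count t = (lis ω).count (s i * t * s i) + if s i = t then 1 else 0 := by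
        rw [leftInvSeq, List.count_cons, hconj]
        simp only [beq_iff_eq]
      show _ = (-1 : ℤˣ) ^ (lis (i :: ω)).count t
      rw [hcount, pow_add]
      obtain rfl | ht := eq_or_ne (s i) t
      · simp [etaGen, mul_comm]
      · simp [etaGen, ht, ht.symm]
    · simp [etaGen, wordProd_cons]

theorem isLiftable_etaGen : M.IsLiftable cs.etaGen := fun i j => by
  rw [← prod_map_alternatingWord_two_mul, prod_map_etaGen]
  ext t
  · simp [(cs.even_count_leftInvSeq_braid i j t).neg_one_pow]
  · simp [wordProd, prod_map_alternatingWord_two_mul]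

noncomputable def etaHom : W →* (W → ℤˣ) ⋊[conjArrow W] W := cs.lift ⟨_, cs.isLiftable_etaGen⟩

theorem etaHom_wordProd (ω : List B) :
    cs.etaHom (π ω) = ⟨fun t => (-1) ^ (lis ω).count t, π ω⟩ := by
  rw [← prod_map_etaGen, wordProd, map_list_prod, List.map_map]
  congr 2
  funext i
  exact cs.lift_apply_simple cs.isLiftable_etaGen i

theorem right_etaHom (w : W) : (cs.etaHom w).right = w := by
  obtain ⟨ω, rfl⟩ := cs.wordProd_surjective w
  rw [etaHom_wordProd]

noncomputable def eta (w t : W) : ℤˣ := (cs.etaHom w).left t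

theorem eta_wordProd (ω : List B) (t : W) : cs.eta (π ω) t = (-1) ^ (lis ω).count t := by
  rw [eta, etaHom_wordProd]

theorem eta_mul (u v t : W) : cs.eta (u * v) t = cs.eta u t * cs.eta v (u⁻¹ * t * u) := by
  simp [eta, SemidirectProduct.mul_left, right_etaHom]

theorem eta_one (t : W) : cs.eta 1 t = 1 := by
  simpa using cs.eta_wordProd [] t

theorem eta_simple_self (i : B) : cs.eta (s i) (s i) = -1 := by
  simpa using cs.eta_wordProd [i] (s i)

theorem eta_inv (u t : W) : cs.eta u⁻¹ t = cs.eta u (u * t * u⁻¹) := by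
  have h := cs.eta_mul u u⁻¹ (u * t * u⁻¹)
  rw [mul_inv_cancel, eta_one, show u⁻¹ * (u * t * u⁻¹) * u = t by group] at h
  rw [← mul_right_inj (cs.eta u (u * t * u⁻¹)), ← h, Int.units_mul_self]

theorem IsReflection.eta_self {t : W} (ht : cs.IsReflection t) : cs.eta t t = -1 := by
  obtain ⟨u, i, rfl⟩ := ht
  have hsplit := cs.eta_mul u (s i * u⁻¹) (u * s i * u⁻¹)
  rw [← mul_assoc, show u⁻¹ * (u * s i * u⁻¹) * u = s i by group] at hsplit
  calc cs.eta (u * s i * u⁻¹) (u * s i * u⁻¹)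
      = cs.eta u (u * s i * u⁻¹) * (cs.eta (s i) (s i) * cs.eta u⁻¹ (s i)) := by
        rw [hsplit, eta_mul, inv_simple, simple_mul_simple_self, one_mul]
    _ = -(cs.eta u (u * s i * u⁻¹) * cs.eta u (u * s i * u⁻¹)) := by
        rw [eta_simple_self, eta_inv]; simp
    _ = -1 := by rw [Int.units_mul_self]

theorem eta_wordProd_eq_neg_one_iff {ω : List B} (hω : cs.IsReduced ω) (t : W) :
    cs.eta (π ω) t = -1 ↔ t ∈ lis ω := by
  rw [eta_wordProd]
  by_cases ht : t ∈ lis ω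
  · simp [ht, List.count_eq_one_of_mem hω.nodup_leftInvSeq ht]
  · simp [ht, List.count_eq_zero_of_not_mem ht]

theorem isLeftInversion_of_eta_eq_neg_one {w t : W} (h : cs.eta w t = -1) :
    cs.IsLeftInversion w t := by
  obtain ⟨ω, hω, rfl⟩ := cs.exists_isReduced w
  exact cs.isLeftInversion_of_mem_leftInvSeq hω ((cs.eta_wordProd_eq_neg_one_iff hω t).1 h)

theorem isLeftInversion_iff_eta_eq_neg_one (w t : W) :
    cs.IsLeftInversion w t ↔ cs.eta w t = -1 := by
  refine ⟨fun ⟨ht, hlt⟩ => ?_, cs.isLeftInversion_of_eta_eq_neg_one⟩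
  have hw : cs.eta w t = -cs.eta (t * w) t := by
    conv_lhs => rw [← mul_inv_cancel_left t w, ht.inv]
    rw [eta_mul, ht.eta_self, show t⁻¹ * t * t = t by group, neg_one_mul]
  have htw : cs.eta (t * w) t = 1 := by
    refine (Int.units_eq_one_or _).resolve_right fun h => ?_
    have := (cs.isLeftInversion_of_eta_eq_neg_one h).2
    rw [← mul_assoc, ht.mul_self, one_mul] at this
    omega
  rw [hw, htw]

theorem isLeftInversion_mul_iff (u v t : W) :
    cs.IsLeftInversion (u * v) t ↔
      Xor (cs.IsLeftInversion u t) (cs.IsLeftInversion v (u⁻¹ * t * u)) := by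
  simp only [isLeftInversion_iff_eta_eq_neg_one, eta_mul]
  rcases Int.units_eq_one_or (cs.eta u t) with h | h <;>
    rcases Int.units_eq_one_or (cs.eta v (u⁻¹ * t * u)) with h' | h' <;> simp [h, h', Xor]

theorem setOf_isLeftInversion_mul (u v : W) :
    {t | cs.IsLeftInversion (u * v) t} =
      symmDiff {t | cs.IsLeftInversion u t} {t | cs.IsLeftInversion v (u⁻¹ * t * u)} := by
  ext t
  exact cs.isLeftInversion_mul_iff u v t

theorem setOf_isLeftInversion_wordProd {ω : List B} (hω : cs.IsReduced ω) :
    {t | cs.IsLeftInversion (π ω) t} = (lis ω).toFinset := by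
  ext t
  simp [isLeftInversion_iff_eta_eq_neg_one, cs.eta_wordProd_eq_neg_one_iff hω]

theorem finite_setOf_isLeftInversion (w : W) : {t | cs.IsLeftInversion w t}.Finite := by
  obtain ⟨ω, hω, rfl⟩ := cs.exists_isReduced w
  rw [cs.setOf_isLeftInversion_wordProd hω]
  exact Finset.finite_toSet _

theorem ncard_setOf_isLeftInversion (w : W) :
    {t | cs.IsLeftInversion w t}.ncard = cs.length w := by
  obtain ⟨ω, hω, rfl⟩ := cs.exists_isReduced w
  rw [cs.setOf_isLeftInversion_wordProd hω, Set.ncard_coe_finset,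
    List.toFinset_card_of_nodup hω.nodup_leftInvSeq, length_leftInvSeq, hω]

theorem ncard_setOf_isLeftInversion_conj (u v : W) :
    {t | cs.IsLeftInversion v (u⁻¹ * t * u)}.ncard = cs.length v := by
  rw [← cs.ncard_setOf_isLeftInversion v]
  have hsurj : Function.Surjective fun t => u⁻¹ * t * u := fun t => ⟨u * t * u⁻¹, by group⟩
  exact Set.ncard_preimage_of_injective_subset_range (f := fun t => u⁻¹ * t * u)
    (fun a b h => by simpa using h)
    (hsurj.range_eq ▸ Set.subset_univ {t | cs.IsLeftInversion v t})

end CoxeterSystem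

theorem two_mul_epsTwo (cs : CoxeterSystem M W) (x y : W) :
    2 * epsTwo cs x y = (cs.length x : ℤ) + (cs.length y : ℤ) - (cs.length (x * y) : ℤ) := by
  have hfin : {t | cs.IsLeftInversion y (x⁻¹ * t * x)}.Finite :=
    (cs.finite_setOf_isLeftInversion y).preimage fun a _ b _ h => by simpa using h
  have h := Set.ncard_symmDiff_add_two_mul_ncard_inter (cs.finite_setOf_isLeftInversion x) hfin
  rw [← cs.setOf_isLeftInversion_mul, cs.ncard_setOf_isLeftInversion,
    cs.ncard_setOf_isLeftInversion, cs.ncard_setOf_isLeftInversion_conj] at h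
  rw [epsTwo]
  omega

/-- `ε₂^W(x,y) = ½(|x| + |y| - |xy|)`.  In particular `|x| + |y| - |xy|` is always
even, `ε₂^W` is a `ℤ`-valued `2`-cocycle, and `ε₂^W(x,y) = 0` exactly when
`|xy| = |x| + |y|`. -/
theorem eps_two_formula (cs : CoxeterSystem M W) :
    (∀ x y : W, 2 * epsTwo cs x y =
      (cs.length x : ℤ) + (cs.length y : ℤ) - (cs.length (x * y) : ℤ)) ∧
    (∀ x y : W, Even ((cs.length x : ℤ) + (cs.length y : ℤ) - (cs.length (x * y) : ℤ))) ∧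
    IsCocycle 2 (fun x : Fin 2 → W => epsTwo cs (x 0) (x 1)) ∧
    (∀ x y : W, epsTwo cs x y = 0 ↔
      cs.length (x * y) = cs.length x + cs.length y) := by
  refine ⟨two_mul_epsTwo cs, fun x y => ⟨epsTwo cs x y, ?_⟩,
    isCocycle_two_of_two_mul_eq _ (two_mul_epsTwo cs), fun x y => ?_⟩
  · rw [← two_mul_epsTwo]; ring
  · have := two_mul_epsTwo cs x y
    omega
end

section
/- For any $x_1, \ldots, x_n \in W$, $\epsilon_n^W(x_1,\ldots,x_n) = \epsilon_n^W(x_n^{-1},\ldots,x_1^{-1})$. -/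
open CoxeterSystem

variable {B W : Type*} [Group W] {M : CoxeterMatrix B}

/-!
The map `ζ ↦ ζ ∘ revInv`, `revInv x = (xₙ⁻¹, …, x₁⁻¹)`, preserves collapsing cocycles with value
`1` on every `(s, …, s)`: reversing and inverting a tuple turns the coboundary formula into itself
up to the sign `(-1)^(n+1)`, and preserves additivity of lengths of adjacent entries. So it is
enough that a collapsing cocycle `η` vanishing on all `(s, …, s)` vanishes. To see this, write an
entry `x k = s * (s * x k)` along a left descent `s` and evaluate `δη = 0` on the `(n+1)`-tuple
obtained by splitting `x k` into these two factors: one face is `x`, and every other face collapses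
or is handled by induction, first on `ℓ (x 0)` (for `k = 0`), then, for tuples beginning with
`k` copies of `s`, downwards on `k`.
-/

section NatIndexed

variable {α : Type*} {g : ℕ → α} {i j k : ℕ} {a b : α}

/- Tuples are handled as functions `ℕ → α`, of which `natTuple n` keeps the first `n` values, so
that all index arithmetic happens in `ℕ`. -/
def natTuple (n : ℕ) (g : ℕ → α) : Fin n → α := fun i => g i

def contractNat [Mul α] (g : ℕ → α) (j : ℕ) : ℕ → α := fun i =>
  if i < j then g i else if i = j then g i * g (i + 1) else g (i + 1)

def splitNat (g : ℕ → α) (k : ℕ) (a b : α) : ℕ → α := fun i =>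
  if i < k then g i else if i = k then a else if i = k + 1 then b else g (i - 1)

theorem natTuple_dite {n : ℕ} (x : Fin n → α) (c : α) :
    natTuple n (fun i => if h : i < n then x ⟨i, h⟩ else c) = x := by
  funext i
  simp [natTuple]

theorem contractNat_of_lt [Mul α] (h : i < j) : contractNat g j i = g i := if_pos h

theorem contractNat_self [Mul α] : contractNat g j j = g j * g (j + 1) := by simp [contractNat]

theorem contractNat_of_gt [Mul α] (h : j < i) : contractNat g j i = g (i + 1) := by
  rw [contractNat, if_neg (by omega), if_neg (by omega)]

theorem splitNat_of_lt (h : i < k) : splitNat g k a b i = g i := if_pos h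

theorem splitNat_self : splitNat g k a b k = a := by simp [splitNat]

theorem splitNat_succ_self : splitNat g k a b (k + 1) = b := by simp [splitNat]

theorem splitNat_of_gt (h : k + 1 < i) : splitNat g k a b i = g (i - 1) := by
  rw [splitNat, if_neg (by omega), if_neg (by omega), if_neg (by omega)]

theorem splitNat_of_le (hpre : ∀ i < k, g i = a) (hi : i ≤ k) : splitNat g k a b i = a := by
  rcases hi.lt_or_eq with hi | rfl
  · rw [splitNat_of_lt hi, hpre i hi]
  · exact splitNat_self

theorem contractNat_splitNat [Mul α] (h : g k = a * b) : contractNat (splitNat g k a b) k = g := by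
  funext i
  rcases lt_trichotomy i k with hi | rfl | hi
  · rw [contractNat_of_lt hi, splitNat_of_lt hi]
  · rw [contractNat_self, splitNat_self, splitNat_succ_self, h]
  · rw [contractNat_of_gt hi, splitNat_of_gt (by omega), Nat.add_sub_cancel]

end NatIndexed

theorem contract_natTuple {n : ℕ} (g : ℕ → W) (j : Fin n) :
    contract (natTuple (n + 1) g) j = natTuple n (contractNat g j) := by
  funext i
  simp only [contract, natTuple, contractNat, Fin.ext_iff, Fin.val_castSucc, Fin.val_succ]

section Vanishing

variable {A : Type*} [AddCommGroup A] {n : ℕ} {η : (Fin n → W) → A}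

theorem IsCocycle.natTuple_eq_zero_of_faces (hcoc : IsCocycle n η) (G : ℕ → W) {k : ℕ} (hk : k < n)
    (hfirst : η (natTuple n fun i => G (i + 1)) = 0) (hlast : η (natTuple n G) = 0)
    (hother : ∀ j < n, j ≠ k → η (natTuple n (contractNat G j)) = 0) :
    η (natTuple n (contractNat G k)) = 0 := by
  have h := hcoc (natTuple (n + 1) G)
  simp only [contract_natTuple] at h
  change η (natTuple n fun i => G (i + 1)) + _ + _ • η (natTuple n G) = 0 at h
  rw [hfirst, hlast, zero_add, smul_zero, add_zero, Finset.sum_eq_single ⟨k, hk⟩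
    (fun j _ hj => by rw [hother j j.isLt (fun h => hj (Fin.ext h)), smul_zero])
    (fun h => absurd (Finset.mem_univ _) h)] at h
  exact ((isUnit_neg_one.pow _).smul_eq_zero).mp h

variable {cs : CoxeterSystem M W}

theorem Collapsing.natTuple_eq_zero (hcol : Collapsing cs n η) {g : ℕ → W} {i : ℕ} (hi : i + 1 < n)
    (h : cs.length (g i * g (i + 1)) = cs.length (g i) + cs.length (g (i + 1))) :
    η (natTuple n g) = 0 :=
  hcol _ ⟨i, by omega⟩ hi h

theorem IsCocycle.natTuple_eq_zero_of_eq_one (hcoc : IsCocycle n η) (hcol : Collapsing cs n η)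
    {g : ℕ → W} {i : ℕ} (hi : i < n) (h1 : g i = 1) : η (natTuple n g) = 0 := by
  rcases lt_or_ge 1 n with hn | hn
  · rcases lt_or_ge (i + 1) n with hin | hin
    · exact hcol.natTuple_eq_zero hin (by rw [h1, one_mul, cs.length_one, zero_add])
    · obtain rfl : i = n - 1 := by omega
      refine hcol.natTuple_eq_zero (i := n - 2) (by omega) ?_
      rw [show n - 2 + 1 = n - 1 by omega, h1, mul_one, cs.length_one, add_zero]
  · obtain rfl : n = 1 := by omega
    have hconst : natTuple 1 g = fun _ => 1 :=
      funext fun j => by rw [Subsingleton.elim j ⟨i, hi⟩]; exact h1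
    have hcontract : contract (fun _ : Fin 2 => (1 : W)) 0 = fun _ => 1 :=
      funext fun _ => by simp [contract]
    rw [hconst]
    simpa [Function.comp_def, hcontract] using hcoc fun _ => 1

theorem IsCocycle.natTuple_eq_zero_of_split (hcoc : IsCocycle n η) (hcol : Collapsing cs n η)
    (hval : ∀ s : B, η (fun _ => cs.simple s) = 0) {g : ℕ → W} {k : ℕ} (hk : k < n) {s : B}
    (hpre : ∀ i < k, g i = cs.simple s) (hdesc : cs.IsLeftDescent (g k) s)
    (hfirst : η (natTuple n fun i => splitNat g k (cs.simple s) (cs.simple s * g k) (i + 1)) = 0)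
    (hnext : k + 1 < n →
      η (natTuple n (contractNat (splitNat g k (cs.simple s) (cs.simple s * g k)) (k + 1))) = 0) :
    η (natTuple n g) = 0 := by
  set G := splitNat g k (cs.simple s) (cs.simple s * g k)
  have hG_le : ∀ i ≤ k, G i = cs.simple s := fun i hi => splitNat_of_le hpre hi
  have hG_succ : G (k + 1) = cs.simple s * g k := splitNat_succ_self
  have hadd : cs.length (G k * G (k + 1)) = cs.length (G k) + cs.length (G (k + 1)) := by
    rw [hG_le k le_rfl, hG_succ, cs.simple_mul_simple_cancel_left, cs.length_simple,
      ← cs.isLeftDescent_iff.mp hdesc, add_comm]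
  have hg : natTuple n g = natTuple n (contractNat G k) := by
    rw [contractNat_splitNat (cs.simple_mul_simple_cancel_left s).symm]
  rw [hg]
  refine hcoc.natTuple_eq_zero_of_faces G hk hfirst ?_ fun j hj hjk => ?_
  · rcases lt_or_ge (k + 1) n with hkn | hkn
    · exact hcol.natTuple_eq_zero hkn hadd
    · have hconst : natTuple n G = fun _ => cs.simple s :=
        funext fun i => hG_le i (by omega)
      rw [hconst, hval]
  · rcases lt_trichotomy j (k + 1) with hjk' | rfl | hjk'
    · refine hcoc.natTuple_eq_zero_of_eq_one hcol hj ?_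
      rw [contractNat_self, hG_le j (by omega), hG_le (j + 1) (by omega),
        cs.simple_mul_simple_self]
    · exact hnext hj
    · refine hcol.natTuple_eq_zero (i := k) (by omega) ?_
      rwa [contractNat_of_lt (by omega), contractNat_of_lt (by omega)]

theorem IsCocycle.natTuple_eq_zero_of_simple_prefix (hcoc : IsCocycle n η) (hcol : Collapsing cs n η)
    (hval : ∀ s : B, η (fun _ => cs.simple s) = 0) {k : ℕ} (hk : 1 ≤ k) (hkn : k ≤ n) {s : B}
    {g : ℕ → W} (hpre : ∀ i < k, g i = cs.simple s) : η (natTuple n g) = 0 := by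
  induction hkn using Nat.decreasingInduction generalizing g with
  | self =>
    have hconst : natTuple n g = fun _ => cs.simple s := funext fun i => hpre i i.isLt
    rw [hconst, hval]
  | of_succ k hkn ih =>
    rcases cs.length_simple_mul (g k) s with hasc | hdesc
    · refine hcol.natTuple_eq_zero (i := k - 1) (by omega) ?_
      rw [Nat.sub_add_cancel hk, hpre (k - 1) (by omega), hasc, cs.length_simple, add_comm]
    · refine hcoc.natTuple_eq_zero_of_split hcol hval hkn hpre
        (cs.isLeftDescent_iff.mpr hdesc) ?_ fun _ => ih (by omega) fun i hi => ?_
      · refine hcol.natTuple_eq_zero (i := k - 1) (by omega) ?_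
        rw [Nat.sub_add_cancel hk, splitNat_self, splitNat_succ_self,
          cs.simple_mul_simple_cancel_left, cs.length_simple]
        omega
      · rw [contractNat_of_lt hi, splitNat_of_le hpre (by omega)]

theorem IsCocycle.natTuple_eq_zero (hcoc : IsCocycle n η) (hn : 1 ≤ n) (hcol : Collapsing cs n η)
    (hval : ∀ s : B, η (fun _ => cs.simple s) = 0) (g : ℕ → W) : η (natTuple n g) = 0 := by
  induction hm : cs.length (g 0) using Nat.strong_induction_on generalizing g with
  | _ m ih =>
  by_cases hg : g 0 = 1
  · exact hcoc.natTuple_eq_zero_of_eq_one hcol hn hg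
  obtain ⟨s, hs⟩ := cs.exists_leftDescent_of_ne_one hg
  have hpre : ∀ i < 0, g i = cs.simple s := by simp
  refine hcoc.natTuple_eq_zero_of_split hcol hval hn hpre hs (ih _ ?_ _ rfl)
    fun _ => hcoc.natTuple_eq_zero_of_simple_prefix hcol hval le_rfl hn (s := s) fun i hi => ?_
  · rw [splitNat_succ_self, ← hm, ← cs.isLeftDescent_iff.mp hs]
    exact Nat.lt_succ_self _
  · rw [contractNat_of_lt hi, splitNat_of_le hpre (by omega)]

theorem IsCocycle.eq_zero_of_collapsing (hcoc : IsCocycle n η) (hn : 1 ≤ n)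
    (hcol : Collapsing cs n η) (hval : ∀ s : B, η (fun _ => cs.simple s) = 0) : η = 0 := by
  funext x
  rw [← natTuple_dite x 1]
  exact hcoc.natTuple_eq_zero hn hcol hval _

end Vanishing

section Uniqueness

variable {A : Type*} [AddCommGroup A] {n : ℕ} {ζ ξ : (Fin n → W) → A} {cs : CoxeterSystem M W}

theorem IsCocycle.sub (hζ : IsCocycle n ζ) (hξ : IsCocycle n ξ) : IsCocycle n (ζ - ξ) := by
  intro x
  have h := congrArg₂ (· - ·) (hζ x) (hξ x)
  rw [sub_zero] at h
  rw [← h]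
  simp only [Pi.sub_apply, smul_sub, Finset.sum_sub_distrib]
  abel

theorem Collapsing.sub (hζ : Collapsing cs n ζ) (hξ : Collapsing cs n ξ) :
    Collapsing cs n (ζ - ξ) := fun x i hi h => by
  rw [Pi.sub_apply, hζ x i hi h, hξ x i hi h, sub_zero]

theorem IsEps.unique [One A] (hn : 1 ≤ n) (hζ : IsEps cs n ζ)
    (hξ : IsEps cs n ξ) : ζ = ξ :=
  sub_eq_zero.mp <| (hζ.1.sub hξ.1).eq_zero_of_collapsing hn (hζ.2.1.sub hξ.2.1) fun s => by
    rw [Pi.sub_apply, hζ.2.2, hξ.2.2, sub_self]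

end Uniqueness

section RevInv

variable {n : ℕ}

def revInv (x : Fin n → W) : Fin n → W := fun k => (x k.rev)⁻¹

theorem revInv_comp_succ (x : Fin (n + 1) → W) : revInv (x ∘ Fin.succ) = revInv x ∘ Fin.castSucc :=
  funext fun k => by simp [revInv, Fin.rev_castSucc]

theorem revInv_comp_castSucc (x : Fin (n + 1) → W) :
    revInv (x ∘ Fin.castSucc) = revInv x ∘ Fin.succ :=
  funext fun k => by simp [revInv, Fin.rev_succ]

theorem revInv_contract (x : Fin (n + 1) → W) (j : Fin n) :
    revInv (contract x j) = contract (revInv x) j.rev := by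
  funext i
  simp only [revInv, contract, Fin.ext_iff, Fin.val_rev, Fin.rev_succ, Fin.rev_castSucc]
  split_ifs <;> first | rfl | omega | exact mul_inv_rev _ _

variable {A : Type*} [AddCommGroup A] {ζ : (Fin n → W) → A} {cs : CoxeterSystem M W}

theorem IsCocycle.comp_revInv (h : IsCocycle n ζ) : IsCocycle n (ζ ∘ revInv) := by
  intro x
  have hsign (j : Fin n) :
      (-1 : ℤ) ^ ((j.rev : ℕ) + 1) = (-1) ^ (n + 1) * (-1) ^ ((j : ℕ) + 1) := by
    rw [← pow_add, Fin.val_rev, neg_one_pow_eq_pow_mod_two,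
      neg_one_pow_eq_pow_mod_two (n := n + 1 + (j + 1))]
    congr 1
    omega
  have hsum : ∑ j : Fin n, (-1 : ℤ) ^ ((j : ℕ) + 1) • ζ (revInv (contract x j))
      = (-1) ^ (n + 1) • ∑ j : Fin n, (-1 : ℤ) ^ ((j : ℕ) + 1) • ζ (contract (revInv x) j) := by
    rw [Finset.smul_sum, ← Equiv.sum_comp Fin.revPerm]
    simp only [revInv_contract, Fin.revPerm_apply, Fin.rev_rev, hsign, mul_smul]
  have hsq : (-1 : ℤ) ^ (n + 1) * (-1) ^ (n + 1) = 1 := by rw [← mul_pow]; norm_num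
  have hy := congrArg ((-1 : ℤ) ^ (n + 1) • ·) (h (revInv x))
  simp only [smul_add, smul_smul, hsq, one_smul, smul_zero] at hy
  simp only [Function.comp_apply, revInv_comp_succ, revInv_comp_castSucc, hsum]
  rw [← hy]
  abel

theorem Collapsing.comp_revInv (h : Collapsing cs n ζ) :
    Collapsing cs n (ζ ∘ revInv) := by
  intro x i hi hadd
  refine h (revInv x) ⟨n - 2 - i, by omega⟩ (show n - 2 - i + 1 < n by omega) ?_
  have hfst : revInv x ⟨n - 2 - i, by omega⟩ = (x ⟨i + 1, hi⟩)⁻¹ := by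
    rw [revInv, show Fin.rev ⟨n - 2 - i, _⟩ = ⟨i + 1, hi⟩ from Fin.ext (by simp; omega)]
  have hsnd : revInv x ⟨n - 2 - i + 1, by omega⟩ = (x i)⁻¹ := by
    rw [revInv, show Fin.rev ⟨n - 2 - i + 1, _⟩ = i from Fin.ext (by simp; omega)]
  show cs.length (revInv x ⟨n - 2 - i, _⟩ * revInv x ⟨n - 2 - i + 1, _⟩)
    = cs.length (revInv x ⟨n - 2 - i, _⟩) + cs.length (revInv x ⟨n - 2 - i + 1, _⟩)
  rw [hfst, hsnd, ← mul_inv_rev, cs.length_inv, cs.length_inv, cs.length_inv, hadd, add_comm]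

theorem IsEps.comp_revInv [One A] (h : IsEps cs n ζ) :
    IsEps cs n (ζ ∘ revInv) :=
  ⟨h.1.comp_revInv, h.2.1.comp_revInv, fun s =>
    (congrArg ζ (funext fun _ => cs.inv_simple s)).trans (h.2.2 s)⟩

theorem IsEps.apply_revInv [One A] (h : IsEps cs n ζ) (x : Fin n → W) :
    ζ x = ζ (revInv x) := by
  rcases Nat.eq_zero_or_pos n with rfl | hn
  · exact congrArg ζ (Subsingleton.elim _ _)
  · exact congrFun (h.unique hn h.comp_revInv) x

end RevInv

theorem eps_reverse_inverse_general (cs : CoxeterSystem M W) (n : ℕ) :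
    (Even n → ∀ ζ : (Fin n → W) → ℤ, IsEps cs n ζ →
      ∀ x : Fin n → W, ζ x = ζ (fun k => (x k.rev)⁻¹)) ∧
    (Odd n → ∀ ζ : (Fin n → W) → ZMod 2, IsEps cs n ζ →
      ∀ x : Fin n → W, ζ x = ζ (fun k => (x k.rev)⁻¹)) :=
  ⟨fun _ _ hζ => hζ.apply_revInv, fun _ _ hζ => hζ.apply_revInv⟩

/-- `εₙ^W(x₁, …, xₙ) = εₙ^W(xₙ⁻¹, …, x₁⁻¹)`, where `εₙ^W` is the unique collapsing
`n`-cocycle (valued in `ℤ` for `n` even, `𝔽₂` for `n` odd, trivial action) with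
`εₙ^W(s, …, s) = 1` for all simple reflections `s`. -/
theorem eps_reverse_inverse (cs : CoxeterSystem M W) (n : ℕ) (hn : 1 ≤ n) :
    (Even n → ∀ ζ : (Fin n → W) → ℤ, IsEps cs n ζ →
      ∀ x : Fin n → W, ζ x = ζ (fun k => (x k.rev)⁻¹)) ∧
    (Odd n → ∀ ζ : (Fin n → W) → ZMod 2, IsEps cs n ζ →
      ∀ x : Fin n → W, ζ x = ζ (fun k => (x k.rev)⁻¹)) :=
  eps_reverse_inverse_general cs n
end

section
/- Let $x_1, \ldots, x_n \in W$ and let $\ell \ge 1$ be odd. If some partial product of $\ell$ consecutive entries satisfies $x_j x_{j+1} \cdots x_{j+\ell-1} = 1$, then $\zeta(x_1,\ldots,x_n) = 0$ for every collapsing $n$-cocycle $\zeta \in Z^n(W,A)$; in particular $\epsilon_n^W(x_1,\ldots,x_n) = 0$. -/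
open CoxeterSystem

variable {B W : Type*} [Group W] {M : CoxeterMatrix B}

open Function

/-!
Write `ℓ` for the Coxeter length. If `x_{i+1} = u v` with `ℓ(u v) = ℓ(u) + ℓ(v)`, the cocycle
identity at `(…, x_i, u, v, x_{i+2}, …)` gives
`ζ(x) = ζ(…, x_i u, v, x_{i+2}, …) + ζ(…, x_i, u, v x_{i+2}, …)`, because every other face still
contains the adjacent pair `(u, v)` and is killed by collapsing. Both new tuples have the same
window product `x_j ⋯ x_{j+l-1}`.

Splitting off a right descent `s` of `x_{j+1}` reduces, by induction on `ℓ(x_{j+1})`, to the case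
`x_{j+1} = s`. A run `x_{j+1} = ⋯ = x_{j+r} = s` is then lengthened by splitting
`x_{j+r+1} = s · (s x_{j+r+1})`, whose first summand contains `s · s = 1` (if `s` is not a left
descent of `x_{j+r+1}`, the pair `(s, x_{j+r+1})` collapses at once). Once the run covers all but
the last entry of the window, `l` odd gives `x_j s x_{j+l-1} = 1`, and then `s` cannot be both a
right descent of `x_j` and a left descent of `x_{j+l-1}`: one of the two pairs collapses.
-/

section Windows

variable {α : Type*}

theorem take_drop_ofFn_comp_val {n : ℕ} (f : ℕ → α) {j l : ℕ} (hjl : j + l ≤ n) :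
    ((List.ofFn (f ∘ Fin.val : Fin n → α)).drop j).take l = (List.range' j l).map f := by
  apply List.ext_getElem
  · simp only [List.length_take, List.length_drop, List.length_ofFn, List.length_map,
      List.length_range']
    omega
  · intro i _ _
    simp

variable [Monoid α]

theorem prod_map_range'_congr_pair {f g : ℕ → α} {j l p : ℕ} (hjp : j ≤ p) (hpl : p + 2 ≤ j + l)
    (hoff : ∀ m, m ≠ p → m ≠ p + 1 → g m = f m) (hpair : g p * g (p + 1) = f p * f (p + 1)) :
    ((List.range' j l).map g).prod = ((List.range' j l).map f).prod := by
  obtain ⟨a, rfl⟩ := Nat.exists_eq_add_of_le hjp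
  obtain ⟨b, rfl⟩ : ∃ b, l = a + (2 + b) := ⟨l - a - 2, by omega⟩
  have hsplit : ∀ h : ℕ → α, ((List.range' j (a + (2 + b))).map h).prod
      = ((List.range' j a).map h).prod * (h (j + a) * h (j + a + 1))
        * ((List.range' (j + a + 2) b).map h).prod := by
    intro h
    rw [← List.range'_append_1, ← List.range'_append_1 (s := j + a) (m := 2)]
    simp [List.range'_succ, mul_assoc]
  have hleft : (List.range' j a).map g = (List.range' j a).map f :=
    List.map_congr_left fun m hm => by
      have := List.mem_range'_1.mp hm
      exact hoff m (by omega) (by omega)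
  have hright : (List.range' (j + a + 2) b).map g = (List.range' (j + a + 2) b).map f :=
    List.map_congr_left fun m hm => by
      have := List.mem_range'_1.mp hm
      exact hoff m (by omega) (by omega)
  rw [hsplit, hsplit, hpair, hleft, hright]

end Windows

namespace CoxeterSystem

variable (cs : CoxeterSystem M W)

def IsLengthAdditive (u v : W) : Prop :=
  cs.length (u * v) = cs.length u + cs.length v

theorem isLengthAdditive_one_left (w : W) : cs.IsLengthAdditive 1 w := by
  simp [IsLengthAdditive]

theorem isLengthAdditive_one_right (w : W) : cs.IsLengthAdditive w 1 := by
  simp [IsLengthAdditive]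

theorem isLengthAdditive_simple_mul_of_isLeftDescent {w : W} {t : B} (h : cs.IsLeftDescent w t) :
    cs.IsLengthAdditive (cs.simple t) (cs.simple t * w) := by
  rw [IsLengthAdditive, cs.simple_mul_simple_cancel_left, cs.length_simple]
  have := cs.isLeftDescent_iff.mp h
  omega

theorem isLengthAdditive_mul_simple_of_isRightDescent {w : W} {t : B}
    (h : cs.IsRightDescent w t) : cs.IsLengthAdditive (w * cs.simple t) (cs.simple t) := by
  rw [IsLengthAdditive, cs.simple_mul_simple_cancel_right, cs.length_simple]
  have := cs.isRightDescent_iff.mp h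
  omega

theorem isLengthAdditive_or_of_mul_simple_mul_eq_one {w b : W} {t : B}
    (h : w * cs.simple t * b = 1) :
    cs.IsLengthAdditive w (cs.simple t) ∨ cs.IsLengthAdditive (cs.simple t) b := by
  have hb : b = cs.simple t * w⁻¹ := by
    rw [eq_inv_of_mul_eq_one_right h, mul_inv_rev, cs.inv_simple]
  have hsb : cs.length (cs.simple t * b) = cs.length w := by
    rw [hb, cs.simple_mul_simple_cancel_left, cs.length_inv]
  have hlb : cs.length b = cs.length (w * cs.simple t) := by
    rw [hb, ← cs.length_inv, mul_inv_rev, inv_inv, cs.inv_simple]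
  simp only [IsLengthAdditive, cs.length_simple, hsb, hlb]
  rcases cs.length_mul_simple w t with h | h <;> omega

end CoxeterSystem

section Cocycles

variable {A : Type*} [AddCommGroup A] {n : ℕ} {ζ : (Fin n → W) → A}

theorem Collapsing.apply_comp_val_eq_zero {cs : CoxeterSystem M W} (hcol : Collapsing cs n ζ)
    {f : ℕ → W} {i : ℕ} (hi : i + 1 < n) (h : cs.IsLengthAdditive (f i) (f (i + 1))) :
    ζ (f ∘ Fin.val) = 0 :=
  hcol _ ⟨i, by omega⟩ hi h

theorem Collapsing.apply_comp_val_eq_zero_of_eq_one {cs : CoxeterSystem M W}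
    (hcol : Collapsing cs n ζ) (hn : 2 ≤ n) {f : ℕ → W} {i : ℕ} (hi : i < n) (h : f i = 1) :
    ζ (f ∘ Fin.val) = 0 := by
  rcases Nat.lt_or_ge (i + 1) n with hi' | hi'
  · exact hcol.apply_comp_val_eq_zero hi' (h ▸ cs.isLengthAdditive_one_left _)
  · obtain ⟨k, rfl⟩ : ∃ k, i = k + 1 := ⟨i - 1, by omega⟩
    exact hcol.apply_comp_val_eq_zero hi (h ▸ cs.isLengthAdditive_one_right _)

theorem contract_comp_val (g : ℕ → W) (m : Fin n) :
    contract (g ∘ Fin.val) m =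
      (fun p : ℕ => if p < m then g p else if p = m then g p * g (p + 1) else g (p + 1)) ∘
        Fin.val := by
  funext p
  simp [contract, Fin.ext_iff]

theorem IsCocycleM.apply_contract_eq_add [DistribMulAction W A] (hcoc : IsCocycleM n ζ)
    (y : Fin (n + 1) → W) {i : ℕ} (hi : i + 2 < n)
    (h_succ : ζ (y ∘ Fin.succ) = 0) (h_castSucc : ζ (y ∘ Fin.castSucc) = 0)
    (h_other : ∀ m : Fin n, (m : ℕ) ≠ i → (m : ℕ) ≠ i + 1 → (m : ℕ) ≠ i + 2 →
      ζ (contract y m) = 0) :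
    ζ (contract y ⟨i + 1, by omega⟩) =
      ζ (contract y ⟨i, by omega⟩) + ζ (contract y ⟨i + 2, hi⟩) := by
  have e := hcoc y
  rw [h_succ, h_castSucc, smul_zero, smul_zero, zero_add, add_zero,
    ← Finset.sum_subset (Finset.subset_univ {⟨i, by omega⟩, ⟨i + 1, by omega⟩, ⟨i + 2, hi⟩})
      fun m _ hm => by
        simp only [Finset.mem_insert, Finset.mem_singleton, Fin.ext_iff, not_or] at hm
        rw [h_other m hm.1 hm.2.1 hm.2.2, smul_zero]] at e
  rw [Finset.sum_insert (by simp [Fin.ext_iff]), Finset.sum_pair (by simp [Fin.ext_iff])] at e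
  rcases neg_one_pow_eq_or ℤ (i + 1) with h | h <;>
    simp only [pow_succ, h, mul_neg, mul_one, neg_neg, one_smul, neg_smul] at e
  · rw [← sub_eq_zero, ← neg_eq_zero, ← e]; abel
  · rw [← sub_eq_zero, ← e]; abel

theorem IsCocycleM.apply_eq_add_of_split [DistribMulAction W A] {cs : CoxeterSystem M W}
    (hcoc : IsCocycleM n ζ) (hcol : Collapsing cs n ζ) {f : ℕ → W} {i : ℕ} (hi : i + 2 < n)
    {u v : W} (hf : f (i + 1) = u * v) (huv : cs.IsLengthAdditive u v) :
    ζ (f ∘ Fin.val) =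
      ζ (update (update f i (f i * u)) (i + 1) v ∘ Fin.val) +
        ζ (update (update f (i + 1) u) (i + 2) (v * f (i + 2)) ∘ Fin.val) := by
  set g : ℕ → W := fun p =>
    if p ≤ i then f p else if p = i + 1 then u else if p = i + 2 then v else f (p - 1)
  have key := hcoc.apply_contract_eq_add (g ∘ Fin.val) hi ?_ ?_ ?_
  · simp only [contract_comp_val] at key
    convert key using 3 <;> funext p <;> simp only [g, comp_apply, update_apply] <;>
      split_ifs <;> first | rfl | omega | simp_all
  · exact hcol.apply_comp_val_eq_zero (f := fun p => g (p + 1)) (i := i) (by omega)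
      (by simpa [g] using huv)
  · exact hcol.apply_comp_val_eq_zero (i := i + 1) (by omega) (by simpa [g] using huv)
  · intro m h0 h1 h2
    rw [contract_comp_val]
    rcases Nat.lt_or_gt_of_ne h0 with hm | hm
    · refine hcol.apply_comp_val_eq_zero (i := i) (by omega) ?_
      simpa [g, show ¬ i < m by omega, show ¬ i + 1 < m by omega, h0.symm,
        show i + 1 ≠ m by omega] using huv
    · refine hcol.apply_comp_val_eq_zero (i := i + 1) (by omega) ?_
      simpa [g, show i + 1 < m by omega, show i + 2 < m by omega] using huv

end Cocycles

section Vanishing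

variable {A : Type*} [AddCommGroup A] [DistribMulAction W A] {n : ℕ} {ζ : (Fin n → W) → A}
  {cs : CoxeterSystem M W}

theorem IsCocycleM.apply_comp_val_eq_zero_of_eq_one (hcoc : IsCocycleM n ζ)
    (hcol : Collapsing cs n ζ) {f : ℕ → W} {i : ℕ} (hi : i < n) (h : f i = 1) :
    ζ (f ∘ Fin.val) = 0 := by
  rcases Nat.lt_or_ge 1 n with hn | hn
  · exact hcol.apply_comp_val_eq_zero_of_eq_one hn hi h
  obtain ⟨rfl, rfl⟩ : n = 1 ∧ i = 0 := by omega
  have hone : f ∘ Fin.val = fun _ : Fin 1 => (1 : W) := by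
    funext p
    rw [Fin.fin_one_eq_zero p]
    exact h
  have hcontract : contract (fun _ : Fin 2 => (1 : W)) 0 = fun _ => 1 := by
    funext p
    simp [contract]
  -- the cocycle identity at `(1, 1)` reads `ζ(1) - ζ(1) + ζ(1) = 0`
  simpa [hone, hcontract, comp_def] using hcoc fun _ => 1

theorem IsCocycleM.apply_eq_zero_of_simple_run (hcoc : IsCocycleM n ζ) (hcol : Collapsing cs n ζ)
    {j l : ℕ} (hl : Odd l) (hjl : j + l ≤ n) {t : B} {r : ℕ} (hr : 1 ≤ r) (hrl : r + 2 ≤ l)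
    {f : ℕ → W} (hprod : ((List.range' j l).map f).prod = 1)
    (hrun : ∀ q, j < q → q ≤ j + r → f q = cs.simple t) :
    ζ (f ∘ Fin.val) = 0 := by
  obtain ⟨d, hd⟩ := Nat.exists_eq_add_of_le hrl
  induction d generalizing r f with
  | zero =>
    have hsr : cs.simple t ^ r = cs.simple t := by
      obtain ⟨k, rfl⟩ : Odd r := by simpa [hd, Nat.odd_add] using hl
      rw [pow_succ, pow_mul, cs.simple_sq, one_pow, one_mul]
    have hw : f j * cs.simple t * f (j + r + 1) = 1 := by
      have hmid : ((List.range' (j + 1) r).map f).prod = cs.simple t ^ r := by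
        refine (List.prod_eq_pow_card _ (cs.simple t) fun w hw => ?_).trans (by simp)
        obtain ⟨q, hq, rfl⟩ := List.mem_map.mp hw
        have := List.mem_range'_1.mp hq
        exact hrun q (by omega) (by omega)
      rw [← hprod, hd, List.range'_succ, List.range'_concat]
      simp [hmid, hsr, mul_assoc, add_comm 1 r, add_assoc]
    rcases cs.isLengthAdditive_or_of_mul_simple_mul_eq_one hw with h | h
    · refine hcol.apply_comp_val_eq_zero (i := j) (by omega) ?_
      rwa [hrun (j + 1) (by omega) (by omega)]
    · refine hcol.apply_comp_val_eq_zero (i := j + r) (by omega) ?_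
      rwa [hrun (j + r) (by omega) le_rfl]
  | succ d ih =>
    rcases cs.length_simple_mul (f (j + r + 1)) t with h | h
    · refine hcol.apply_comp_val_eq_zero (i := j + r) (by omega) ?_
      rw [hrun (j + r) (by omega) le_rfl, CoxeterSystem.IsLengthAdditive, h, cs.length_simple,
        add_comm]
    have hf : f (j + r + 1) = cs.simple t * (cs.simple t * f (j + r + 1)) :=
      (cs.simple_mul_simple_cancel_left t).symm
    rw [hcoc.apply_eq_add_of_split hcol (i := j + r) (by omega) hf
      (cs.isLengthAdditive_simple_mul_of_isLeftDescent (cs.isLeftDescent_iff.mpr h))]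
    have hA : ζ (update (update f (j + r) (f (j + r) * cs.simple t)) (j + r + 1)
        (cs.simple t * f (j + r + 1)) ∘ Fin.val) = 0 :=
      hcoc.apply_comp_val_eq_zero_of_eq_one hcol (i := j + r) (by omega)
        (by simp [hrun (j + r) (by omega) le_rfl])
    have hB : ζ (update (update f (j + r + 1) (cs.simple t)) (j + r + 2)
        (cs.simple t * f (j + r + 1) * f (j + r + 2)) ∘ Fin.val) = 0 := by
      refine ih (r := r + 1) (by omega) (by omega) ?_ ?_ (by omega)
      · refine (prod_map_range'_congr_pair (p := j + r + 1) (by omega) (by omega) ?_ ?_).trans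
          hprod
        · intro m h0 h1
          simp [h0, h1]
        · simp [mul_assoc]
      · intro q hq1 hq2
        rcases Nat.lt_or_ge q (j + r + 1) with hq | hq
        · simp [show q ≠ j + r + 1 by omega, show q ≠ j + r + 2 by omega,
            hrun q hq1 (by omega)]
        · obtain rfl : q = j + r + 1 := by omega
          simp
    rw [hA, hB, add_zero]

theorem IsCocycleM.apply_eq_zero_of_window_prod_eq_one (hcoc : IsCocycleM n ζ)
    (hcol : Collapsing cs n ζ) {j l : ℕ} (hl : Odd l) (hl3 : 3 ≤ l) (hjl : j + l ≤ n)
    {f : ℕ → W} (hprod : ((List.range' j l).map f).prod = 1) :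
    ζ (f ∘ Fin.val) = 0 := by
  induction hN : cs.length (f (j + 1)) using Nat.strong_induction_on generalizing f with
  | _ N ih =>
  by_cases h1 : f (j + 1) = 1
  · exact hcoc.apply_comp_val_eq_zero_of_eq_one hcol (by omega) h1
  obtain ⟨t, ht⟩ := cs.exists_rightDescent_of_ne_one h1
  set v := f (j + 1) * cs.simple t with hv
  have hf : f (j + 1) = v * cs.simple t := (cs.simple_mul_simple_cancel_right t).symm
  rw [hcoc.apply_eq_add_of_split hcol (i := j) (by omega) hf
    (cs.isLengthAdditive_mul_simple_of_isRightDescent ht)]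
  have hA : ζ (update (update f j (f j * v)) (j + 1) (cs.simple t) ∘ Fin.val) = 0 := by
    refine hcoc.apply_eq_zero_of_simple_run hcol hl hjl (t := t) le_rfl (by omega) ?_ ?_
    · refine (prod_map_range'_congr_pair le_rfl (by omega) ?_ ?_).trans hprod
      · intro m h0 h1
        simp [h0, h1]
      · simp [hf, mul_assoc]
    · intro q hq1 hq2
      obtain rfl : q = j + 1 := by omega
      simp
  have hB : ζ (update (update f (j + 1) v) (j + 2) (cs.simple t * f (j + 2)) ∘ Fin.val) = 0 := by
    refine ih (cs.length v) ?_ ?_ (by simp)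
    · have := cs.isRightDescent_iff.mp ht
      rw [← hv] at this
      omega
    · refine (prod_map_range'_congr_pair (p := j + 1) (by omega) (by omega) ?_ ?_).trans hprod
      · intro m h0 h1
        simp [h0, h1]
      · simp [hf, mul_assoc]
  rw [hA, hB, add_zero]

end Vanishing

theorem collapsing_vanishes_of_odd_partial_product_one_general (cs : CoxeterSystem M W)
    (n : ℕ) {A : Type*} [AddCommGroup A] [DistribMulAction W A]
    (ζ : (Fin n → W) → A) (hcoc : IsCocycleM n ζ) (hcol : Collapsing cs n ζ)
    (x : Fin n → W) (j l : ℕ) (hl : Odd l) (hjl : j + l ≤ n)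
    (hprod : (((List.ofFn x).drop j).take l).prod = 1) :
    ζ x = 0 := by
  obtain ⟨f, rfl⟩ : ∃ f : ℕ → W, f ∘ Fin.val = x :=
    ⟨fun m => if h : m < n then x ⟨m, h⟩ else 1, by funext i; simp⟩
  rw [take_drop_ofFn_comp_val f hjl] at hprod
  rcases Nat.lt_or_ge l 3 with hl3 | hl3
  · obtain rfl : l = 1 := by
      obtain ⟨k, rfl⟩ := hl
      omega
    exact hcoc.apply_comp_val_eq_zero_of_eq_one hcol (i := j) (by omega) (by simpa using hprod)
  · exact hcoc.apply_eq_zero_of_window_prod_eq_one hcol hl hl3 hjl hprod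

/-- If some partial product of an odd number `l` of consecutive entries equals `1`,
i.e. `x_{j+1} x_{j+2} ⋯ x_{j+l} = 1`, then every collapsing `n`-cocycle
`ζ ∈ Zⁿ(W, A)` (valued in a `ℤ[W]`-module `A`) vanishes at `(x₁, …, xₙ)`; in
particular `εₙ^W(x₁, …, xₙ) = 0`. -/
theorem collapsing_vanishes_of_odd_partial_product_one (cs : CoxeterSystem M W)
    (n : ℕ) (hn : 1 ≤ n) {A : Type*} [AddCommGroup A] [DistribMulAction W A]
    (ζ : (Fin n → W) → A) (hcoc : IsCocycleM n ζ) (hcol : Collapsing cs n ζ)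
    (x : Fin n → W) (j l : ℕ) (hl : Odd l) (hjl : j + l ≤ n)
    (hprod : (((List.ofFn x).drop j).take l).prod = 1) :
    ζ x = 0 :=
  collapsing_vanishes_of_odd_partial_product_one_general cs n ζ hcoc hcol x j l hl hjl hprod
end

section
/- For all $x, y, z \in W$ with $y = s$ a simple reflection: $\epsilon_3^W(x,s,z) = 1$ if $|xs| < |x|$ and $|sz| < |z|$, and $\epsilon_3^W(x,s,z) = 0$ otherwise. -/
open CoxeterSystem

variable {B W : Type*} [Group W] {M : CoxeterMatrix B}

/-! Collapsing kills `ζ (x, s, z)` unless `s` is a right descent of `x` and a left descent of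
`z`. In that case the cocycle identity at `(x s, s, s, z)` replaces `x` by `s`, and the one at
`(s, s, s, s z)` replaces `z` by `s`, since every other term of these identities collapses.
Hence `ζ (x, s, z) = ζ (s, s, s) = 1`, for any coefficient group. -/

section

variable {cs : CoxeterSystem M W} {A : Type*} [AddCommGroup A] {ζ : (Fin 3 → W) → A}

theorem IsCocycle.apply_three (h : IsCocycle 3 ζ) (a b c d : W) :
    ζ ![b, c, d] - ζ ![a * b, c, d] + ζ ![a, b * c, d] - ζ ![a, b, c * d] + ζ ![a, b, c] = 0 := by
  have key := h ![a, b, c, d]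
  have h₀ : contract ![a, b, c, d] 0 = ![a * b, c, d] := by funext k; fin_cases k <;> rfl
  have h₁ : contract ![a, b, c, d] 1 = ![a, b * c, d] := by funext k; fin_cases k <;> rfl
  have h₂ : contract ![a, b, c, d] 2 = ![a, b, c * d] := by funext k; fin_cases k <;> rfl
  have hsucc : ![a, b, c, d] ∘ Fin.succ = ![b, c, d] := by funext k; fin_cases k <;> rfl
  have hcast : ![a, b, c, d] ∘ Fin.castSucc = ![a, b, c] := by funext k; fin_cases k <;> rfl
  simp only [Fin.sum_univ_three, h₀, h₁, h₂, hsucc, hcast] at key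
  norm_num at key
  rw [← key]; abel

namespace Collapsing

theorem apply_eq_zero_of_length_mul_left (h : Collapsing cs 3 ζ) {a b : W}
    (hab : cs.length (a * b) = cs.length a + cs.length b) (c : W) : ζ ![a, b, c] = 0 :=
  h ![a, b, c] 0 (by norm_num) (by simpa using hab)

theorem apply_eq_zero_of_length_mul_right (h : Collapsing cs 3 ζ) {b c : W}
    (hbc : cs.length (b * c) = cs.length b + cs.length c) (a : W) : ζ ![a, b, c] = 0 :=
  h ![a, b, c] 1 (by norm_num) (by simpa using hbc)

theorem apply_one_left (h : Collapsing cs 3 ζ) (b c : W) : ζ ![1, b, c] = 0 :=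
  h.apply_eq_zero_of_length_mul_left (by simp) c

theorem apply_one_middle (h : Collapsing cs 3 ζ) (a c : W) : ζ ![a, 1, c] = 0 :=
  h.apply_eq_zero_of_length_mul_left (by simp) c

theorem apply_simple_of_not_isRightDescent (h : Collapsing cs 3 ζ) {x : W} {i : B}
    (hx : ¬cs.IsRightDescent x i) (z : W) : ζ ![x, cs.simple i, z] = 0 :=
  h.apply_eq_zero_of_length_mul_left
    (by rw [cs.not_isRightDescent_iff.mp hx, cs.length_simple]) z

theorem apply_simple_of_not_isLeftDescent (h : Collapsing cs 3 ζ) {z : W} {i : B}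
    (hz : ¬cs.IsLeftDescent z i) (x : W) : ζ ![x, cs.simple i, z] = 0 :=
  h.apply_eq_zero_of_length_mul_right
    (by rw [cs.not_isLeftDescent_iff.mp hz, cs.length_simple, add_comm]) x

end Collapsing

theorem apply_simple_eq_of_isRightDescent (hcoc : IsCocycle 3 ζ) (hcol : Collapsing cs 3 ζ)
    {x : W} {i : B} (hx : cs.IsRightDescent x i) (z : W) :
    ζ ![x, cs.simple i, z] = ζ ![cs.simple i, cs.simple i, z] := by
  have hxs : ¬cs.IsRightDescent (x * cs.simple i) i :=
    cs.isRightDescent_iff_not_isRightDescent_mul.mp hx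
  have key := hcoc.apply_three (x * cs.simple i) (cs.simple i) (cs.simple i) z
  rw [cs.simple_mul_simple_cancel_right, cs.simple_mul_simple_self, hcol.apply_one_middle,
    hcol.apply_simple_of_not_isRightDescent hxs,
    hcol.apply_simple_of_not_isRightDescent hxs] at key
  rw [← sub_eq_zero, ← neg_eq_zero, ← key]; abel

theorem apply_simple_simple_eq_of_isLeftDescent (hcoc : IsCocycle 3 ζ)
    (hcol : Collapsing cs 3 ζ) {z : W} {i : B} (hz : cs.IsLeftDescent z i) :
    ζ ![cs.simple i, cs.simple i, z] = ζ fun _ => cs.simple i := by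
  have hsz : ¬cs.IsLeftDescent (cs.simple i * z) i :=
    cs.isLeftDescent_iff_not_isLeftDescent_mul.mp hz
  have key := hcoc.apply_three (cs.simple i) (cs.simple i) (cs.simple i) (cs.simple i * z)
  rw [cs.simple_mul_simple_cancel_left, cs.simple_mul_simple_self, hcol.apply_one_left,
    hcol.apply_one_middle, hcol.apply_simple_of_not_isLeftDescent hsz] at key
  have hconst : ![cs.simple i, cs.simple i, cs.simple i] = fun _ => cs.simple i := by
    funext k; fin_cases k <;> rfl
  rw [← hconst, ← sub_eq_zero, ← neg_eq_zero, ← key]; abel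

end

/-- For `s` a simple reflection: `ε₃^W(x, s, z) = 1` if `|xs| < |x|` and `|sz| < |z|`,
and `ε₃^W(x, s, z) = 0` otherwise.  Here `ε₃^W ∈ Z³(W, 𝔽₂)` is the unique collapsing
`3`-cocycle with `ε₃^W(s, s, s) = 1` for all simple `s`. -/
theorem eps_three_middle_simple (cs : CoxeterSystem M W)
    (ζ : (Fin 3 → W) → ZMod 2) (hζ : IsEps cs 3 ζ) (x z : W) (i : B) :
    ζ ![x, cs.simple i, z] =
      if cs.length (x * cs.simple i) < cs.length x ∧
          cs.length (cs.simple i * z) < cs.length z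
      then 1 else 0 := by
  obtain ⟨hcoc, hcol, hone⟩ := hζ
  split_ifs with hdesc
  · obtain ⟨hx, hz⟩ : cs.IsRightDescent x i ∧ cs.IsLeftDescent z i := hdesc
    rw [apply_simple_eq_of_isRightDescent hcoc hcol hx,
      apply_simple_simple_eq_of_isLeftDescent hcoc hcol hz, hone]
  · rcases not_and_or.mp hdesc with hx | hz
    · exact hcol.apply_simple_of_not_isRightDescent hx z
    · exact hcol.apply_simple_of_not_isLeftDescent hz x
end
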